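/- arXiv:1907.11420 — 6 statements merged into one kernel-verified Lean document; each statement's English description precedes it below -/
import Mathlib

section
/- Let G = (𝒱, ℰ) be a countably infinite connected simple graph with all vertex degrees bounded by some d_max, let 𝒱′ ⊆ 𝒱, let Δ > 1 and N ≥ 1. For every k ≥ 1 and every f ∈ ℓ²(𝒱′_N) satisfying f(X) = 0 whenever |∂X| < D_min(N) + k, one has ⟨f, H^N f⟩ ≥ (1/2)(1 − 1/Δ)(D_min(N) + k) · ‖f‖². -/
variable {𝒱 : Type*} [DecidableEq 𝒱]

/-- The edge boundary size `|∂X|` of a finite set `X` of vertices: the number of edges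
with exactly one endpoint in `X` (counted as ordered pairs with first coordinate in `X`). -/
noncomputable def bndCard (G : SimpleGraph 𝒱) (X : Finset 𝒱) : ℕ :=
  {p : 𝒱 × 𝒱 | G.Adj p.1 p.2 ∧ p.1 ∈ X ∧ p.2 ∉ X}.ncard

/-- `D_min(N)`: the minimal edge boundary size among `N`-element subsets of the vertex set
(the isoperimetric constant). -/
noncomputable def Dmin (G : SimpleGraph 𝒱) (N : ℕ) : ℕ :=
  sInf {m : ℕ | ∃ X : Finset 𝒱, X.card = N ∧ bndCard G X = m}

/-- `N`-particle configurations in `𝒱' ⊆ 𝒱`. -/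
abbrev GCfg (𝒱' : Set 𝒱) (N : ℕ) := {X : Finset 𝒱 // ↑X ⊆ 𝒱' ∧ X.card = N}

/-- Adjacency in the `N`-th symmetric product of the induced subgraph on `𝒱'`:
the symmetric difference of the two configurations is an edge of `G`. -/
def prodAdj (G : SimpleGraph 𝒱) {𝒱' : Set 𝒱} {N : ℕ} (X Y : GCfg 𝒱' N) : Prop :=
  ∃ x y : 𝒱, G.Adj x y ∧ symmDiff X.1 Y.1 = {x, y}

section Aux

variable {G : SimpleGraph 𝒱} {𝒱' : Set 𝒱} {N : ℕ}

lemma prodAdj_symm {X Y : GCfg 𝒱' N} (h : prodAdj G X Y) : prodAdj G Y X := by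
  obtain ⟨x, y, hadj, hs⟩ := h
  exact ⟨x, y, hadj, by rwa [symmDiff_comm]⟩

lemma prodAdj_irrefl (X : GCfg 𝒱' N) : ¬ prodAdj G X X := by
  rintro ⟨x, y, hadj, hs⟩
  rw [symmDiff_self] at hs
  have : x ∈ (⊥ : Finset 𝒱) := hs ▸ Finset.mem_insert_self x {y}
  simp at this

/-- the set of boundary pairs of `X` -/
lemma bndPairs_finite (hfin : ∀ v : 𝒱, {w : 𝒱 | G.Adj v w}.Finite) (X : Finset 𝒱) :
    {p : 𝒱 × 𝒱 | G.Adj p.1 p.2 ∧ p.1 ∈ X ∧ p.2 ∉ X}.Finite := by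
  have h1 : Set.Finite (⋃ x ∈ (X : Set 𝒱), {w | G.Adj x w}) :=
    Set.Finite.biUnion X.finite_toSet (fun x _ => hfin x)
  refine (X.finite_toSet.prod h1).subset ?_
  rintro ⟨a, b⟩ ⟨hab, haX, hbX⟩
  exact ⟨haX, Set.mem_biUnion haX hab⟩

lemma bndCard_le (hfin : ∀ v : 𝒱, {w : 𝒱 | G.Adj v w}.Finite) {dmax : ℕ}
    (hdeg : ∀ v : 𝒱, {w : 𝒱 | G.Adj v w}.ncard ≤ dmax) (X : Finset 𝒱) :
    bndCard G X ≤ X.card * dmax := by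
  classical
  set F : Finset (𝒱 × 𝒱) := X.biUnion (fun x => {x} ×ˢ (hfin x).toFinset) with hF
  have hsub : {p : 𝒱 × 𝒱 | G.Adj p.1 p.2 ∧ p.1 ∈ X ∧ p.2 ∉ X} ⊆ ↑F := by
    rintro ⟨a, b⟩ ⟨hab, haX, hbX⟩
    simp only [hF, Finset.coe_biUnion, Set.mem_iUnion, Finset.coe_product]
    refine ⟨a, haX, ?_⟩
    simp [hab]
  have h1 : bndCard G X ≤ F.card := by
    have := Set.ncard_le_ncard hsub F.finite_toSet
    rwa [Set.ncard_coe_finset] at this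
  refine h1.trans ?_
  calc F.card ≤ ∑ x ∈ X, ({x} ×ˢ (hfin x).toFinset).card := Finset.card_biUnion_le
    _ ≤ ∑ _x ∈ X, dmax := by
        refine Finset.sum_le_sum (fun x _ => ?_)
        rw [Finset.card_product, Finset.card_singleton, one_mul,
           ← Set.ncard_eq_toFinset_card _ (hfin x)]
        exact hdeg x
    _ = X.card * dmax := by rw [Finset.sum_const, smul_eq_mul]

lemma symmDiff_split {X Y : Finset 𝒱} (hcard : X.card = Y.card) {x y : 𝒱} (hxy : x ≠ y)
    (h : symmDiff X Y = {x, y}) :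
    (x ∈ X ∧ y ∉ X) ∨ (y ∈ X ∧ x ∉ X) := by
  classical
  have hx : x ∈ symmDiff X Y := h ▸ Finset.mem_insert_self x {y}
  have hy : y ∈ symmDiff X Y := h ▸ (by simp : y ∈ ({x, y} : Finset 𝒱))
  rw [Finset.mem_symmDiff] at hx hy
  have hne : symmDiff X Y ≠ ∅ := by
    rw [h]; simp [Finset.insert_ne_empty]
  rcases hx with ⟨hxX, hxY⟩ | ⟨hxY, hxX⟩
  · rcases hy with ⟨hyX, hyY⟩ | ⟨hyY, hyX⟩
    · -- both in X \ Y : then Y ⊆ X and cards equal → X = Y, contradiction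
      exfalso
      have hYX : Y ⊆ X := by
        intro z hz
        by_contra hzX
        have : z ∈ symmDiff X Y := Finset.mem_symmDiff.2 (Or.inr ⟨hz, hzX⟩)
        rw [h] at this
        rcases Finset.mem_insert.1 this with rfl | hzy
        · exact hzX hxX
        · rw [Finset.mem_singleton] at hzy; subst hzy; exact hzX hyX
      have : X = Y := (Finset.eq_of_subset_of_card_le hYX hcard.le).symm
      rw [this, symmDiff_self] at hne
      exact hne rfl
    · exact Or.inl ⟨hxX, hyX⟩
  · rcases hy with ⟨hyX, hyY⟩ | ⟨hyY, hyX⟩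
    · exact Or.inr ⟨hyX, hxX⟩
    · exfalso
      have hXY : X ⊆ Y := by
        intro z hz
        by_contra hzY
        have : z ∈ symmDiff X Y := Finset.mem_symmDiff.2 (Or.inl ⟨hz, hzY⟩)
        rw [h] at this
        rcases Finset.mem_insert.1 this with rfl | hzy
        · exact hzY hxY
        · rw [Finset.mem_singleton] at hzy; subst hzy; exact hzY hyY
      have : X = Y := Finset.eq_of_subset_of_card_le hXY hcard.ge
      rw [this, symmDiff_self] at hne
      exact hne rfl

lemma nbr_maps (X : GCfg 𝒱' N) {Y : GCfg 𝒱' N} (h : prodAdj G X Y) :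
    symmDiff X.1 Y.1 ∈
      (fun p : 𝒱 × 𝒱 => ({p.1, p.2} : Finset 𝒱)) ''
        {p : 𝒱 × 𝒱 | G.Adj p.1 p.2 ∧ p.1 ∈ X.1 ∧ p.2 ∉ X.1} := by
  obtain ⟨x, y, hadj, hs⟩ := h
  have hcard : X.1.card = Y.1.card := X.2.2.trans Y.2.2.symm
  rcases symmDiff_split hcard hadj.ne hs with ⟨hx, hy⟩ | ⟨hy, hx⟩
  · exact ⟨(x, y), ⟨hadj, hx, hy⟩, hs.symm⟩
  · exact ⟨(y, x), ⟨hadj.symm, hy, hx⟩, by rw [hs, Finset.pair_comm]⟩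

lemma nbr_inj (X : GCfg 𝒱' N) :
    Set.InjOn (fun Y : GCfg 𝒱' N => symmDiff X.1 Y.1) {Y | prodAdj G X Y} := by
  intro Y _ Z _ h
  simp only at h
  have : Y.1 = Z.1 := by
    have h1 := congrArg (fun D => symmDiff X.1 D) h
    simpa [symmDiff_symmDiff_cancel_left] using h1
  exact Subtype.ext this

lemma nbr_finite (hfin : ∀ v : 𝒱, {w : 𝒱 | G.Adj v w}.Finite) (X : GCfg 𝒱' N) :
    {Y : GCfg 𝒱' N | prodAdj G X Y}.Finite := by
  refine Set.Finite.of_finite_image ?_ (nbr_inj X)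
  refine Set.Finite.subset
    ((bndPairs_finite hfin X.1).image (fun p : 𝒱 × 𝒱 => ({p.1, p.2} : Finset 𝒱))) ?_
  rintro D ⟨Y, hY, rfl⟩
  exact nbr_maps X hY

lemma nbr_ncard_le (hfin : ∀ v : 𝒱, {w : 𝒱 | G.Adj v w}.Finite) {dmax : ℕ}
    (hdeg : ∀ v : 𝒱, {w : 𝒱 | G.Adj v w}.ncard ≤ dmax) (X : GCfg 𝒱' N) :
    {Y : GCfg 𝒱' N | prodAdj G X Y}.ncard ≤ N * dmax := by
  have h1 := Set.ncard_le_ncard_of_injOn _ (fun Y hY => nbr_maps X hY) (nbr_inj X)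
    ((bndPairs_finite hfin X.1).image _)
  have h2 := Set.ncard_image_le (s := {p : 𝒱 × 𝒱 | G.Adj p.1 p.2 ∧ p.1 ∈ X.1 ∧ p.2 ∉ X.1})
    (f := fun p : 𝒱 × 𝒱 => ({p.1, p.2} : Finset 𝒱)) (bndPairs_finite hfin X.1)
  have h3 := bndCard_le hfin hdeg X.1
  rw [X.2.2] at h3
  exact h1.trans (h2.trans h3)

end Aux

section Aux2

open Classical in
/-- indicator of adjacency times `Re(conj f(X) (f(Y)-f(X)))` -/
noncomputable def gP (G : SimpleGraph 𝒱) {𝒱' : Set 𝒱} {N : ℕ} (f : GCfg 𝒱' N → ℂ)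
    (p : GCfg 𝒱' N × GCfg 𝒱' N) : ℝ :=
  if prodAdj G p.1 p.2 then ((starRingEnd ℂ) (f p.1) * (f p.2 - f p.1)).re else 0

open Classical in
/-- indicator of adjacency times `‖f(X)‖²` -/
noncomputable def wP (G : SimpleGraph 𝒱) {𝒱' : Set 𝒱} {N : ℕ} (f : GCfg 𝒱' N → ℂ)
    (p : GCfg 𝒱' N × GCfg 𝒱' N) : ℝ :=
  if prodAdj G p.1 p.2 then ‖f p.1‖^2 else 0

variable {G : SimpleGraph 𝒱} {𝒱'' : Set 𝒱} {N' : ℕ} {f : GCfg 𝒱'' N' → ℂ}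

lemma wP_of_adj {X Y : GCfg 𝒱'' N'} (h : prodAdj G X Y) : wP G f (X, Y) = ‖f X‖^2 := by
  simp [wP, h]

lemma wP_of_not_adj {X Y : GCfg 𝒱'' N'} (h : ¬ prodAdj G X Y) : wP G f (X, Y) = 0 := by
  simp [wP, h]

lemma gP_of_adj {X Y : GCfg 𝒱'' N'} (h : prodAdj G X Y) :
    gP G f (X, Y) = ((starRingEnd ℂ) (f X) * (f Y - f X)).re := by
  simp [gP, h]

lemma gP_of_not_adj {X Y : GCfg 𝒱'' N'} (h : ¬ prodAdj G X Y) : gP G f (X, Y) = 0 := by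
  simp [gP, h]

lemma wP_nonneg (p : GCfg 𝒱'' N' × GCfg 𝒱'' N') : 0 ≤ wP G f p := by
  unfold wP; split <;> positivity

lemma wP_tsum_eq (hfin : ∀ v : 𝒱, {w : 𝒱 | G.Adj v w}.Finite) (X : GCfg 𝒱'' N') :
    ∑' Y, wP G f (X, Y) = ((nbr_finite hfin X).toFinset.card : ℝ) * ‖f X‖^2 := by
  classical
  rw [tsum_eq_sum (s := (nbr_finite hfin X).toFinset)
    (fun Y hY => wP_of_not_adj (fun h => hY ((nbr_finite hfin X).mem_toFinset.2 h)))]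
  rw [Finset.sum_congr rfl (fun Y hY => wP_of_adj ((nbr_finite hfin X).mem_toFinset.1 hY))]
  rw [Finset.sum_const, nsmul_eq_mul]

lemma wP_summable (hfin : ∀ v : 𝒱, {w : 𝒱 | G.Adj v w}.Finite) {dmax : ℕ}
    (hdeg : ∀ v : 𝒱, {w : 𝒱 | G.Adj v w}.ncard ≤ dmax)
    (hf2 : Summable (fun X : GCfg 𝒱'' N' => ‖f X‖^2)) :
    Summable (wP G f) := by
  classical
  rw [summable_prod_of_nonneg wP_nonneg]
  constructor
  · intro X
    exact summable_of_ne_finset_zero (s := (nbr_finite hfin X).toFinset)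
      (fun Y hY => wP_of_not_adj (fun h => hY ((nbr_finite hfin X).mem_toFinset.2 h)))
  · refine Summable.of_nonneg_of_le (fun X => tsum_nonneg (fun Y => wP_nonneg _))
      (fun X => ?_) (hf2.mul_left ((N' * dmax : ℕ) : ℝ))
    rw [wP_tsum_eq hfin X]
    have hcard : ((nbr_finite hfin X).toFinset.card : ℝ) ≤ ((N' * dmax : ℕ) : ℝ) := by
      have := nbr_ncard_le hfin hdeg X
      rw [Set.ncard_eq_toFinset_card _ (nbr_finite hfin X)] at this
      exact_mod_cast this
    exact mul_le_mul_of_nonneg_right hcard (by positivity)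

lemma gP_abs_le (p : GCfg 𝒱'' N' × GCfg 𝒱'' N') :
    ‖gP G f p‖ ≤ 2 * wP G f p + wP G f p.swap := by
  obtain ⟨X, Y⟩ := p
  by_cases h : prodAdj G X Y
  · rw [Prod.swap_prod_mk, gP_of_adj h, wP_of_adj h, wP_of_adj (prodAdj_symm h)]
    have h1 : |((starRingEnd ℂ) (f X) * (f Y - f X)).re| ≤ ‖f X‖ * ‖f Y - f X‖ := by
      refine (Complex.abs_re_le_norm _).trans (le_of_eq ?_)
      rw [norm_mul, RCLike.norm_conj]
    have h2 : ‖f Y - f X‖ ≤ ‖f Y‖ + ‖f X‖ := norm_sub_le _ _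
    have h3 : ‖f X‖ * ‖f Y‖ ≤ (‖f X‖^2 + ‖f Y‖^2)/2 := by nlinarith [sq_nonneg (‖f X‖ - ‖f Y‖)]
    have h4 : (0:ℝ) ≤ ‖f X‖ := norm_nonneg _
    rw [Real.norm_eq_abs]
    nlinarith [norm_nonneg (f Y - f X), norm_nonneg (f Y)]
  · rw [Prod.swap_prod_mk, gP_of_not_adj h, wP_of_not_adj h,
      wP_of_not_adj (fun h' => h (prodAdj_symm h'))]
    simp

lemma wP_swap_summable (h : Summable (wP G f)) :
    Summable (fun p : GCfg 𝒱'' N' × GCfg 𝒱'' N' => wP G f p.swap) :=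
  (Equiv.prodComm (GCfg 𝒱'' N') (GCfg 𝒱'' N')).summable_iff.2 h

lemma gP_summable (hfin : ∀ v : 𝒱, {w : 𝒱 | G.Adj v w}.Finite) {dmax : ℕ}
    (hdeg : ∀ v : 𝒱, {w : 𝒱 | G.Adj v w}.ncard ≤ dmax)
    (hf2 : Summable (fun X : GCfg 𝒱'' N' => ‖f X‖^2)) :
    Summable (gP G f) := by
  have hw := wP_summable hfin hdeg hf2
  exact Summable.of_norm_bounded ((hw.mul_left 2).add (wP_swap_summable hw)) gP_abs_le

end Aux2

/-- The `N`-magnon XXZ operator with droplet boundary conditions, applied pointwise: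
`(H^N f)(X) = −(1/(2Δ)) Σ_{Y ~ X} (f(Y) − f(X)) + (1/2)(1 − 1/Δ)|∂X| f(X)`. -/
noncomputable def HNapply (G : SimpleGraph 𝒱) (𝒱' : Set 𝒱) (N : ℕ) (Δ : ℝ)
    (f : GCfg 𝒱' N → ℂ) (X : GCfg 𝒱' N) : ℂ :=
  -(1/(2*Δ)) * (∑ᶠ (Y : GCfg 𝒱' N) (_ : prodAdj G X Y), (f Y - f X)) +
    (((1/2) * (1 - 1/Δ) * (bndCard G X.1) : ℝ) : ℂ) * f X

set_option maxHeartbeats 1000000 in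
/-- for `f ∈ ℓ²(𝒱'_N)` vanishing on all configurations with edge boundary
smaller than `D_min(N) + k`, the quadratic form of the `N`-magnon XXZ operator satisfies
`⟨f, H^N f⟩ ≥ (1/2)(1 − 1/Δ)(D_min(N) + k)‖f‖²`. -/
theorem xxz_form_lower_bound
    [Countable 𝒱] [Infinite 𝒱]
    (G : SimpleGraph 𝒱) (hconn : G.Connected)
    (dmax : ℕ) (hfin : ∀ v : 𝒱, {w : 𝒱 | G.Adj v w}.Finite)
    (hdeg : ∀ v : 𝒱, {w : 𝒱 | G.Adj v w}.ncard ≤ dmax)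
    (𝒱' : Set 𝒱) (Δ : ℝ) (hΔ : 1 < Δ) (N : ℕ) (hN : 1 ≤ N) (k : ℕ) (hk : 1 ≤ k)
    (f : GCfg 𝒱' N → ℂ)
    (hf2 : Summable (fun X : GCfg 𝒱' N => ‖f X‖^2))
    (hsupp : ∀ X : GCfg 𝒱' N, bndCard G X.1 < Dmin G N + k → f X = 0) :
    (1/2) * (1 - 1/Δ) * ((Dmin G N + k : ℕ) : ℝ) * (∑' X : GCfg 𝒱' N, ‖f X‖^2) ≤
      (∑' X : GCfg 𝒱' N, (starRingEnd ℂ) (f X) * HNapply G 𝒱' N Δ f X).re := by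
  classical
  have hΔ0 : (0:ℝ) < Δ := lt_trans one_pos hΔ
  have hc0 : (0:ℝ) ≤ (1/2) * (1 - 1/Δ) := by
    have h1 : 1/Δ ≤ 1 := by rw [div_le_one hΔ0]; exact hΔ.le
    linarith
  have hnb : ∀ X : GCfg 𝒱' N, {Y : GCfg 𝒱' N | prodAdj G X Y}.Finite := nbr_finite hfin
  set c : ℝ := (1/2) * (1 - 1/Δ) with hc
  set r0 : ℝ := -(1/(2*Δ)) with hr0
  set u : GCfg 𝒱' N → ℂ :=
    fun X => (starRingEnd ℂ) (f X) * ∑ Y ∈ (hnb X).toFinset, (f Y - f X) with hu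
  -- step 1: rewrite HNapply with a finite sum
  have hfs : ∀ X : GCfg 𝒱' N,
      (∑ᶠ (Y : GCfg 𝒱' N) (_ : prodAdj G X Y), (f Y - f X))
        = ∑ Y ∈ (hnb X).toFinset, (f Y - f X) :=
    fun X => finsum_cond_eq_sum_of_cond_iff (fun Y => f Y - f X)
      (fun {Y} _ => ((hnb X).mem_toFinset (a := Y)).symm)
  have hH : ∀ X : GCfg 𝒱' N, HNapply G 𝒱' N Δ f X =
      -(1/(2*(Δ:ℂ))) * (∑ Y ∈ (hnb X).toFinset, (f Y - f X)) +
        ((c * (bndCard G X.1 : ℝ) : ℝ) : ℂ) * f X := by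
    intro X
    unfold HNapply
    rw [hfs X, hc]
  -- step 2: per-term formula
  have hmc : ∀ z : ℂ, (starRingEnd ℂ) z * z = ((‖z‖^2 : ℝ) : ℂ) := by
    intro z
    rw [mul_comm, Complex.mul_conj, Complex.normSq_eq_norm_sq]
  have hterm : ∀ X : GCfg 𝒱' N, (starRingEnd ℂ) (f X) * HNapply G 𝒱' N Δ f X
      = ((r0 : ℝ) : ℂ) * u X + ((c * (bndCard G X.1 : ℝ) * ‖f X‖^2 : ℝ) : ℂ) := by
    intro X
    rw [hH X, mul_add]
    congr 1
    · simp only [hu]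
      rw [hr0]
      push_cast
      ring
    · rw [show (starRingEnd ℂ) (f X) * (((c * (bndCard G X.1 : ℝ) : ℝ) : ℂ) * f X)
          = ((c * (bndCard G X.1 : ℝ) : ℝ) : ℂ) * ((starRingEnd ℂ) (f X) * f X) from by ring,
        hmc (f X)]
      push_cast
      ring
  -- step 3: summability
  have hw := wP_summable (f := f) hfin hdeg hf2
  have hg := gP_summable (f := f) hfin hdeg hf2
  have hW : Summable (fun p : GCfg 𝒱' N × GCfg 𝒱' N => 2 * wP G f p + wP G f p.swap) :=
    (hw.mul_left 2).add (wP_swap_summable hw)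
  have hWfib : Summable
      (fun X : GCfg 𝒱' N => ∑' Y, (2 * wP G f (X, Y) + wP G f (Prod.swap (X, Y)))) :=
    (hW.hasSum.prod_fiberwise (fun X => (hW.prod_factor X).hasSum)).summable
  have hu_norm : ∀ X : GCfg 𝒱' N,
      ‖u X‖ ≤ ∑' Y, (2 * wP G f (X, Y) + wP G f (Prod.swap (X, Y))) := by
    intro X
    have hbound : ∀ Y ∈ (hnb X).toFinset,
        ‖(starRingEnd ℂ) (f X) * (f Y - f X)‖
          ≤ 2 * wP G f (X, Y) + wP G f (Prod.swap (X, Y)) := by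
      intro Y hY
      have hadj : prodAdj G X Y := (hnb X).mem_toFinset.1 hY
      rw [Prod.swap_prod_mk, wP_of_adj hadj, wP_of_adj (prodAdj_symm hadj)]
      have e1 : ‖(starRingEnd ℂ) (f X) * (f Y - f X)‖ = ‖f X‖ * ‖f Y - f X‖ := by
        rw [norm_mul, RCLike.norm_conj]
      rw [e1]
      nlinarith [norm_sub_le (f Y) (f X), norm_nonneg (f X), norm_nonneg (f Y),
        norm_nonneg (f Y - f X), sq_nonneg (‖f X‖ - ‖f Y‖)]
    calc ‖u X‖ ≤ ∑ Y ∈ (hnb X).toFinset, ‖(starRingEnd ℂ) (f X) * (f Y - f X)‖ := by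
          simp only [hu]
          rw [Finset.mul_sum]
          exact norm_sum_le _ _
      _ ≤ ∑ Y ∈ (hnb X).toFinset, (2 * wP G f (X, Y) + wP G f (Prod.swap (X, Y))) :=
          Finset.sum_le_sum hbound
      _ = ∑' Y, (2 * wP G f (X, Y) + wP G f (Prod.swap (X, Y))) := by
          refine (tsum_eq_sum (s := (hnb X).toFinset) (fun Y hY => ?_)).symm
          have hna : ¬ prodAdj G X Y := fun h => hY ((hnb X).mem_toFinset.2 h)
          rw [Prod.swap_prod_mk, wP_of_not_adj hna,
            wP_of_not_adj (fun h => hna (prodAdj_symm h))]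
          ring
  have hu_sum : Summable u := Summable.of_norm_bounded hWfib hu_norm
  have hVq : Summable (fun X : GCfg 𝒱' N => c * (bndCard G X.1 : ℝ) * ‖f X‖^2) := by
    refine Summable.of_nonneg_of_le
      (fun X => mul_nonneg (mul_nonneg hc0 (Nat.cast_nonneg _)) (sq_nonneg _))
      (fun X => ?_) (hf2.mul_left (c * ((N*dmax : ℕ):ℝ)))
    have hb : ((bndCard G X.1 : ℕ) : ℝ) ≤ ((N*dmax : ℕ) : ℝ) := by
      have h := bndCard_le hfin hdeg X.1
      rw [X.2.2] at h
      exact_mod_cast h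
    rw [mul_assoc c ((N*dmax : ℕ):ℝ)]
    rw [mul_assoc c (bndCard G X.1 : ℝ)]
    exact mul_le_mul_of_nonneg_left
      (mul_le_mul_of_nonneg_right hb (sq_nonneg _)) hc0
  have hofReal : Summable
      (fun X : GCfg 𝒱' N => ((c * (bndCard G X.1 : ℝ) * ‖f X‖^2 : ℝ) : ℂ)) :=
    Complex.summable_ofReal.2 hVq
  have hsumH : Summable (fun X : GCfg 𝒱' N => (starRingEnd ℂ) (f X) * HNapply G 𝒱' N Δ f X) :=
    ((hu_sum.mul_left _).add hofReal).congr (fun X => (hterm X).symm)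
  -- step 4: pass to real parts
  rw [Complex.re_tsum hsumH]
  have hre : ∀ X : GCfg 𝒱' N, ((starRingEnd ℂ) (f X) * HNapply G 𝒱' N Δ f X).re
      = r0 * (u X).re + c * (bndCard G X.1 : ℝ) * ‖f X‖^2 := by
    intro X
    rw [hterm X]
    rw [Complex.add_re, Complex.re_ofReal_mul, Complex.ofReal_re]
  rw [tsum_congr hre]
  have hA : Summable (fun X : GCfg 𝒱' N => r0 * (u X).re) :=
    ((Complex.hasSum_re hu_sum.hasSum).summable).mul_left r0
  rw [Summable.tsum_add hA hVq, tsum_mul_left]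
  -- step 5: identify the hopping sum
  have hslice : ∀ X : GCfg 𝒱' N, (u X).re = ∑' Y, gP G f (X, Y) := by
    intro X
    rw [tsum_eq_sum (s := (hnb X).toFinset)
      (fun Y hY => gP_of_not_adj (fun h => hY ((hnb X).mem_toFinset.2 h)))]
    simp only [hu]
    rw [Finset.mul_sum, Complex.re_sum]
    exact Finset.sum_congr rfl (fun Y hY => (gP_of_adj ((hnb X).mem_toFinset.1 hY)).symm)
  have hT : ∑' X : GCfg 𝒱' N, (u X).re = ∑' p, gP G f p := by
    rw [tsum_congr hslice]
    exact (Summable.tsum_prod' hg (fun X => hg.prod_factor X)).symm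
  -- step 6: the hopping term is nonnegative
  have hswap : Summable (fun p : GCfg 𝒱' N × GCfg 𝒱' N => gP G f (Prod.swap p)) :=
    (Equiv.prodComm _ _).summable_iff.2 hg
  have hswap_tsum : ∑' p : GCfg 𝒱' N × GCfg 𝒱' N, gP G f (Prod.swap p) = ∑' p, gP G f p :=
    (Equiv.prodComm _ _).tsum_eq (gP G f)
  have hpair : ∀ p : GCfg 𝒱' N × GCfg 𝒱' N, gP G f p + gP G f (Prod.swap p) ≤ 0 := by
    rintro ⟨X, Y⟩
    rw [Prod.swap_prod_mk]
    by_cases h : prodAdj G X Y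
    · rw [gP_of_adj h, gP_of_adj (prodAdj_symm h)]
      rw [← Complex.add_re]
      have hr : (starRingEnd ℂ) (f X) * (f Y - f X) + (starRingEnd ℂ) (f Y) * (f X - f Y)
          = -((f X - f Y) * (starRingEnd ℂ) (f X - f Y)) := by
        rw [map_sub]; ring
      rw [hr, Complex.mul_conj]
      simpa using Complex.normSq_nonneg (f X - f Y)
    · rw [gP_of_not_adj h, gP_of_not_adj (fun h' => h (prodAdj_symm h'))]
      simp
  have hTle : ∑' p, gP G f p ≤ 0 := by
    have hsum2 : ∑' p : GCfg 𝒱' N × GCfg 𝒱' N, (gP G f p + gP G f (Prod.swap p))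
        = ∑' p, gP G f p + ∑' p : GCfg 𝒱' N × GCfg 𝒱' N, gP G f (Prod.swap p) :=
      Summable.tsum_add hg hswap
    have hle : ∑' p : GCfg 𝒱' N × GCfg 𝒱' N, (gP G f p + gP G f (Prod.swap p)) ≤ 0 :=
      tsum_nonpos hpair
    rw [hsum2, hswap_tsum] at hle
    linarith
  have hfinal1 : 0 ≤ r0 * ∑' X : GCfg 𝒱' N, (u X).re := by
    rw [hT]
    have hr0le : r0 ≤ 0 := by
      have : (0:ℝ) ≤ 1/(2*Δ) := by positivity
      rw [hr0]; linarith
    nlinarith [mul_nonneg (neg_nonneg.2 hr0le) (neg_nonneg.2 hTle)]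
  -- step 7: potential term bound
  have hpt : ∑' X : GCfg 𝒱' N, (c * ((Dmin G N + k : ℕ) : ℝ)) * ‖f X‖^2
      ≤ ∑' X : GCfg 𝒱' N, c * (bndCard G X.1 : ℝ) * ‖f X‖^2 := by
    refine Summable.tsum_le_tsum (fun X => ?_) (hf2.mul_left _) hVq
    by_cases hx : bndCard G X.1 < Dmin G N + k
    · rw [hsupp X hx]
      simp
    · push_neg at hx
      have hcast : ((Dmin G N + k : ℕ) : ℝ) ≤ (bndCard G X.1 : ℝ) := by exact_mod_cast hx
      exact mul_le_mul_of_nonneg_right (mul_le_mul_of_nonneg_left hcast hc0) (sq_nonneg _)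
  have hpt' : c * ((Dmin G N + k : ℕ) : ℝ) * (∑' X : GCfg 𝒱' N, ‖f X‖^2)
      ≤ ∑' X : GCfg 𝒱' N, c * (bndCard G X.1 : ℝ) * ‖f X‖^2 := by
    rw [← tsum_mul_left]
    exact hpt
  linarith
end

section
/- For every fixed K ∈ ℕ (K ≥ 1) there exists a constant C ≥ 0 such that for all ℓ ≥ 1: | P̃_{K,ℓ} − ℓ^{2K−1}/(2K−1)! | ≤ C · ℓ^{2K−2}, where P̃_{K,ℓ} = |{Y ⊆ [1,ℓ] : ℓ ∈ Y and cl(Y) = K}| is the number of subsets of {1,…,ℓ} which contain ℓ and have exactly K connected components. -/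
/-- Number of connected components (clusters) of a finite set of integers. -/
def clZ (Y : Finset ℤ) : ℕ := (Y.filter (fun y => y - 1 ∉ Y)).card

/-- `P̃_{K,ℓ}`: the number of subsets of `[1,ℓ]` containing `ℓ` with exactly `K` clusters. -/
noncomputable def PKlTilde (K ℓ : ℕ) : ℕ :=
  ((Finset.Icc (1:ℤ) (ℓ:ℤ)).powerset.filter (fun Y => (ℓ:ℤ) ∈ Y ∧ clZ Y = K)).card

/-- Auxiliary: number of subsets of `[1,m]` with exactly `K` clusters. -/
noncomputable def Qcl (K m : ℕ) : ℕ :=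
  ((Finset.Icc (1:ℤ) (m:ℤ)).powerset.filter (fun Y => clZ Y = K)).card

lemma clZ_eq_zero {Y : Finset ℤ} : clZ Y = 0 ↔ Y = ∅ := by
  constructor
  · intro h
    by_contra hne
    have hY : Y.Nonempty := Finset.nonempty_iff_ne_empty.mpr hne
    have hm : Y.min' hY ∈ Y := Finset.min'_mem _ _
    have hm1 : Y.min' hY - 1 ∉ Y := fun hc => by
      have := Finset.min'_le Y _ hc; omega
    have hmem : Y.min' hY ∈ Y.filter (fun y => y - 1 ∉ Y) :=
      Finset.mem_filter.mpr ⟨hm, hm1⟩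
    have h0 : Y.filter (fun y => y - 1 ∉ Y) = ∅ := Finset.card_eq_zero.mp h
    rw [h0] at hmem
    exact absurd hmem (Finset.notMem_empty _)
  · rintro rfl; simp [clZ]

lemma clZ_filter_erase (Y : Finset ℤ) (a : ℤ) (h : a + 1 ∉ Y) :
    (Y.erase a).filter (fun y => y - 1 ∉ Y.erase a) =
      (Y.filter (fun y => y - 1 ∉ Y)).erase a := by
  ext y
  simp only [Finset.mem_filter, Finset.mem_erase]
  constructor
  · rintro ⟨⟨hya, hyY⟩, hc⟩
    refine ⟨hya, hyY, fun h1 => hc ⟨fun he => h ?_, h1⟩⟩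
    have hy : y = a + 1 := by omega
    rwa [hy] at hyY
  · rintro ⟨hya, hyY, h1⟩
    exact ⟨⟨hya, hyY⟩, fun hc => h1 hc.2⟩

lemma clZ_erase_of_pred_mem {Y : Finset ℤ} {a : ℤ} (h1 : a + 1 ∉ Y) (h2 : a - 1 ∈ Y) :
    clZ (Y.erase a) = clZ Y := by
  unfold clZ
  rw [clZ_filter_erase Y a h1, Finset.erase_eq_of_notMem]
  simp only [Finset.mem_filter, not_and, not_not]
  exact fun _ => h2

lemma clZ_erase_of_pred_not_mem {Y : Finset ℤ} {a : ℤ} (ha : a ∈ Y) (h1 : a + 1 ∉ Y)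
    (h2 : a - 1 ∉ Y) : clZ (Y.erase a) + 1 = clZ Y := by
  unfold clZ
  rw [clZ_filter_erase Y a h1]
  exact Finset.card_erase_add_one (Finset.mem_filter.mpr ⟨ha, h2⟩)

lemma Qcl_K_zero (m : ℕ) : Qcl 0 m = 1 := by
  unfold Qcl
  have h : (Finset.Icc (1:ℤ) (m:ℤ)).powerset.filter (fun Y => clZ Y = 0) = {∅} := by
    ext Y
    simp only [Finset.mem_filter, Finset.mem_powerset, clZ_eq_zero, Finset.mem_singleton]
    constructor
    · exact fun h => h.2
    · rintro rfl; exact ⟨Finset.empty_subset _, rfl⟩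
  rw [h]; rfl

lemma Qcl_m_zero (K : ℕ) (hK : 1 ≤ K) : Qcl K 0 = 0 := by
  unfold Qcl
  rw [Finset.card_eq_zero, Finset.filter_eq_empty_iff]
  intro Y hY
  simp only [Nat.cast_zero, Finset.mem_powerset] at hY
  have : Y = ∅ := by
    have : (Finset.Icc (1:ℤ) 0) = ∅ := Finset.Icc_eq_empty (by norm_num)
    rw [this] at hY
    exact Finset.subset_empty.mp hY
  rw [this, clZ_eq_zero.mpr rfl]
  omega

lemma PKlTilde_K_zero (ℓ : ℕ) : PKlTilde 0 ℓ = 0 := by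
  unfold PKlTilde
  rw [Finset.card_eq_zero, Finset.filter_eq_empty_iff]
  rintro Y _ ⟨hmem, hcl⟩
  rw [clZ_eq_zero.mp hcl] at hmem
  exact Finset.notMem_empty _ hmem

lemma PKlTilde_zero (K : ℕ) : PKlTilde K 0 = 0 := by
  unfold PKlTilde
  rw [Finset.card_eq_zero, Finset.filter_eq_empty_iff]
  rintro Y hY ⟨hmem, _⟩
  simp only [Finset.mem_powerset] at hY
  have := hY hmem
  simp only [Nat.cast_zero, Finset.mem_Icc] at this
  omega

lemma clZ_one : clZ ({1} : Finset ℤ) = 1 := by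
  decide

lemma PKlTilde_one (K : ℕ) (hK : 1 ≤ K) : PKlTilde K 1 = Nat.choose 1 (2*K-1) := by
  unfold PKlTilde
  rw [show ((1:ℕ):ℤ) = 1 by norm_num, Finset.Icc_self]
  have hfilter : ({1} : Finset ℤ).powerset.filter (fun Y => (1:ℤ) ∈ Y ∧ clZ Y = K)
      = if K = 1 then {({1} : Finset ℤ)} else ∅ := by
    ext Y
    simp only [Finset.mem_filter, Finset.mem_powerset, Finset.subset_singleton_iff]
    split_ifs with h1
    · simp only [Finset.mem_singleton]
      constructor
      · rintro ⟨hY | rfl, hmem, hcl⟩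
        · rw [hY] at hmem; exact absurd hmem (Finset.notMem_empty _)
        · rfl
      · rintro rfl
        exact ⟨Or.inr rfl, Finset.mem_singleton_self _, by rw [clZ_one, h1]⟩
    · simp only [Finset.notMem_empty, iff_false]
      rintro ⟨hY | rfl, hmem, hcl⟩
      · rw [hY] at hmem; exact absurd hmem (Finset.notMem_empty _)
      · rw [clZ_one] at hcl; exact h1 hcl.symm
  rw [hfilter]
  split_ifs with h1
  · rw [Finset.card_singleton, h1]
    rfl
  · rw [Finset.card_empty, Nat.choose_eq_zero_of_lt (by omega)]

lemma Qcl_rec (K m : ℕ) : Qcl K (m+1) = Qcl K m + PKlTilde K (m+1) := by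
  classical
  have hsplit := Finset.card_filter_add_card_filter_not
      (s := (Finset.Icc (1:ℤ) ((m+1:ℕ):ℤ)).powerset.filter (fun Y => clZ Y = K))
      (p := fun Y => ((m+1:ℕ):ℤ) ∈ Y)
  rw [Finset.filter_filter, Finset.filter_filter] at hsplit
  have h1 : ((Finset.Icc (1:ℤ) ((m+1:ℕ):ℤ)).powerset.filter
        (fun Y => clZ Y = K ∧ ((m+1:ℕ):ℤ) ∈ Y)).card = PKlTilde K (m+1) := by
    unfold PKlTilde
    congr 1
    apply Finset.filter_congr
    intro Y _
    constructor
    · exact fun h => ⟨h.2, h.1⟩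
    · exact fun h => ⟨h.2, h.1⟩
  have h2 : (Finset.Icc (1:ℤ) ((m+1:ℕ):ℤ)).powerset.filter
        (fun Y => clZ Y = K ∧ ¬ ((m+1:ℕ):ℤ) ∈ Y) =
      (Finset.Icc (1:ℤ) ((m:ℕ):ℤ)).powerset.filter (fun Y => clZ Y = K) := by
    ext Y
    simp only [Finset.mem_filter, Finset.mem_powerset]
    constructor
    · rintro ⟨hsub, hcl, hnm⟩
      refine ⟨fun y hy => ?_, hcl⟩
      have h := hsub hy
      rw [Finset.mem_Icc] at h ⊢
      push_cast at h ⊢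
      have : y ≠ (m:ℤ) + 1 := fun he => by
        rw [he] at hy
        exact hnm (by push_cast; exact hy)
      omega
    · rintro ⟨hsub, hcl⟩
      refine ⟨fun y hy => ?_, hcl, fun hmem => ?_⟩
      · have h := hsub hy
        rw [Finset.mem_Icc] at h ⊢
        push_cast at h ⊢
        omega
      · have h := hsub hmem
        rw [Finset.mem_Icc] at h
        push_cast at h
        omega
  rw [h1, h2] at hsplit
  unfold Qcl
  omega

lemma PKlTilde_rec (K n : ℕ) (hK : 1 ≤ K) :
    PKlTilde K (n+2) = PKlTilde K (n+1) + Qcl (K-1) n := by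
  classical
  have hcast : ((n+2:ℕ):ℤ) = (n:ℤ) + 2 := by push_cast; ring
  have hcast1 : ((n+1:ℕ):ℤ) = (n:ℤ) + 1 := by push_cast; ring
  have hsplit := Finset.card_filter_add_card_filter_not
      (s := (Finset.Icc (1:ℤ) ((n+2:ℕ):ℤ)).powerset.filter
        (fun Y => ((n+2:ℕ):ℤ) ∈ Y ∧ clZ Y = K))
      (p := fun Y => ((n:ℤ)+1) ∈ Y)
  rw [Finset.filter_filter, Finset.filter_filter] at hsplit
  -- Part 1: sets with n+1 ∈ Y  ↔  P K (n+1)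
  have h1 : ((Finset.Icc (1:ℤ) ((n+2:ℕ):ℤ)).powerset.filter
        (fun Y => (((n+2:ℕ):ℤ) ∈ Y ∧ clZ Y = K) ∧ ((n:ℤ)+1) ∈ Y)).card
      = PKlTilde K (n+1) := by
    unfold PKlTilde
    apply Finset.card_nbij' (i := fun Y => Y.erase ((n:ℤ)+2))
      (j := fun Y => insert ((n:ℤ)+2) Y)
    · intro Y hY
      simp only [Finset.mem_coe, Finset.mem_filter, Finset.mem_powerset] at hY ⊢
      obtain ⟨hsub, ⟨hmem, hcl⟩, hmem1⟩ := hY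
      rw [hcast] at hmem hsub
      have htop : (n:ℤ) + 2 + 1 ∉ Y := fun hc => by
        have := hsub hc; rw [Finset.mem_Icc] at this; omega
      refine ⟨?_, ?_, ?_⟩
      · intro y hy
        rw [Finset.mem_erase] at hy
        have := hsub hy.2
        rw [Finset.mem_Icc] at this ⊢
        rw [hcast1]
        have := hy.1
        omega
      · rw [hcast1, Finset.mem_erase]
        exact ⟨by omega, hmem1⟩
      · rw [clZ_erase_of_pred_mem htop (by rw [show (n:ℤ)+2-1 = (n:ℤ)+1 by ring]; exact hmem1)]
        exact hcl
    · intro Y hY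
      simp only [Finset.mem_coe, Finset.mem_filter, Finset.mem_powerset] at hY ⊢
      obtain ⟨hsub, hmem, hcl⟩ := hY
      rw [hcast1] at hmem hsub
      have hnot : (n:ℤ) + 2 ∉ Y := fun hc => by
        have := hsub hc; rw [Finset.mem_Icc] at this; omega
      refine ⟨?_, ⟨?_, ?_⟩, ?_⟩
      · intro y hy
        rw [Finset.mem_insert] at hy
        rw [Finset.mem_Icc, hcast]
        rcases hy with rfl | hy
        · omega
        · have := hsub hy; rw [Finset.mem_Icc] at this; omega
      · rw [hcast]; exact Finset.mem_insert_self _ _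
      · have htop : (n:ℤ) + 2 + 1 ∉ insert ((n:ℤ)+2) Y := by
          rw [Finset.mem_insert]
          push_neg
          refine ⟨by omega, fun hc => ?_⟩
          have := hsub hc; rw [Finset.mem_Icc] at this; omega
        have hpred : (n:ℤ) + 2 - 1 ∈ insert ((n:ℤ)+2) Y := by
          rw [Finset.mem_insert]
          right
          rw [show (n:ℤ)+2-1 = (n:ℤ)+1 by ring]
          exact hmem
        have := clZ_erase_of_pred_mem (Y := insert ((n:ℤ)+2) Y) htop hpred
        rw [Finset.erase_insert hnot] at this
        rw [← this]; exact hcl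
      · exact Finset.mem_insert_of_mem hmem
    · intro Y hY
      simp only [Finset.mem_coe, Finset.mem_filter, Finset.mem_powerset] at hY
      obtain ⟨_, ⟨hmem, _⟩, _⟩ := hY
      rw [hcast] at hmem
      exact Finset.insert_erase hmem
    · intro Y hY
      simp only [Finset.mem_coe, Finset.mem_filter, Finset.mem_powerset] at hY
      obtain ⟨hsub, _, _⟩ := hY
      rw [hcast1] at hsub
      have hnot : (n:ℤ) + 2 ∉ Y := fun hc => by
        have := hsub hc; rw [Finset.mem_Icc] at this; omega
      exact Finset.erase_insert hnot
  -- Part 2: sets with n+1 ∉ Y  ↔  Q (K-1) n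
  have h2 : ((Finset.Icc (1:ℤ) ((n+2:ℕ):ℤ)).powerset.filter
        (fun Y => (((n+2:ℕ):ℤ) ∈ Y ∧ clZ Y = K) ∧ ¬ ((n:ℤ)+1) ∈ Y)).card
      = Qcl (K-1) n := by
    unfold Qcl
    apply Finset.card_nbij' (i := fun Y => Y.erase ((n:ℤ)+2))
      (j := fun Y => insert ((n:ℤ)+2) Y)
    · intro Y hY
      simp only [Finset.mem_coe, Finset.mem_filter, Finset.mem_powerset] at hY ⊢
      obtain ⟨hsub, ⟨hmem, hcl⟩, hmem1⟩ := hY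
      rw [hcast] at hmem hsub
      have htop : (n:ℤ) + 2 + 1 ∉ Y := fun hc => by
        have := hsub hc; rw [Finset.mem_Icc] at this; omega
      refine ⟨?_, ?_⟩
      · intro y hy
        rw [Finset.mem_erase] at hy
        have h := hsub hy.2
        rw [Finset.mem_Icc] at h ⊢
        have h1 := hy.1
        have h2 : y ≠ (n:ℤ)+1 := fun he => hmem1 (he ▸ hy.2)
        omega
      · have := clZ_erase_of_pred_not_mem hmem htop
          (by rw [show (n:ℤ)+2-1 = (n:ℤ)+1 by ring]; exact hmem1)
        omega
    · intro Y hY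
      simp only [Finset.mem_coe, Finset.mem_filter, Finset.mem_powerset] at hY ⊢
      obtain ⟨hsub, hcl⟩ := hY
      have hbound : ∀ y ∈ Y, 1 ≤ y ∧ y ≤ (n:ℤ) := by
        intro y hy
        have := hsub hy; rw [Finset.mem_Icc] at this; exact this
      have hnot : (n:ℤ) + 2 ∉ Y := fun hc => by have := hbound _ hc; omega
      refine ⟨?_, ⟨?_, ?_⟩, ?_⟩
      · intro y hy
        rw [Finset.mem_insert] at hy
        rw [Finset.mem_Icc, hcast]
        rcases hy with rfl | hy
        · omega
        · have := hbound _ hy; omega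
      · rw [hcast]; exact Finset.mem_insert_self _ _
      · have htop : (n:ℤ) + 2 + 1 ∉ insert ((n:ℤ)+2) Y := by
          rw [Finset.mem_insert]
          push_neg
          exact ⟨by omega, fun hc => by have := hbound _ hc; omega⟩
        have hpred : (n:ℤ) + 2 - 1 ∉ insert ((n:ℤ)+2) Y := by
          rw [Finset.mem_insert]
          push_neg
          refine ⟨by omega, fun hc => ?_⟩
          have := hbound _ hc; omega
        have := clZ_erase_of_pred_not_mem (Finset.mem_insert_self _ _) htop hpred
        rw [Finset.erase_insert hnot] at this
        omega
      · rw [Finset.mem_insert]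
        push_neg
        exact ⟨by omega, fun hc => by have := hbound _ hc; omega⟩
    · intro Y hY
      simp only [Finset.mem_coe, Finset.mem_filter, Finset.mem_powerset] at hY
      obtain ⟨_, ⟨hmem, _⟩, _⟩ := hY
      rw [hcast] at hmem
      exact Finset.insert_erase hmem
    · intro Y hY
      simp only [Finset.mem_coe, Finset.mem_filter, Finset.mem_powerset] at hY
      obtain ⟨hsub, _⟩ := hY
      have hnot : (n:ℤ) + 2 ∉ Y := fun hc => by
        have := hsub hc; rw [Finset.mem_Icc] at this; omega
      exact Finset.erase_insert hnot
  rw [h1, h2] at hsplit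
  exact hsplit.symm

lemma main_count : ∀ ℓ : ℕ,
    (∀ K, 1 ≤ K → PKlTilde K ℓ = Nat.choose ℓ (2*K-1)) ∧
    (∀ K, Qcl K ℓ = Nat.choose (ℓ+1) (2*K)) := by
  intro ℓ
  induction ℓ using Nat.strong_induction_on with
  | _ ℓ ih =>
    match ℓ with
    | 0 =>
      refine ⟨fun K hK => ?_, fun K => ?_⟩
      · rw [PKlTilde_zero]
        exact (Nat.choose_eq_zero_of_lt (by omega)).symm
      · cases K with
        | zero => rw [Qcl_K_zero]; rfl
        | succ K' =>
          rw [Qcl_m_zero _ (by omega)]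
          exact (Nat.choose_eq_zero_of_lt (by omega)).symm
    | 1 =>
      refine ⟨fun K hK => PKlTilde_one K hK, fun K => ?_⟩
      have h := Qcl_rec K 0
      rw [show (0:ℕ)+1 = 1 from rfl] at h
      cases K with
      | zero => rw [Qcl_K_zero]; rfl
      | succ K' =>
        rw [h, Qcl_m_zero _ (by omega), PKlTilde_one _ (by omega)]
        cases K' with
        | zero => rfl
        | succ K'' =>
          rw [Nat.choose_eq_zero_of_lt (show 1 < 2*(K''+1+1)-1 by omega),
            Nat.choose_eq_zero_of_lt (show 1+1 < 2*(K''+1+1) by omega)]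
    | (n+2) =>
      have ih1 := ih (n+1) (by omega)
      have ih0 := ih n (by omega)
      have hP : ∀ K, 1 ≤ K → PKlTilde K (n+2) = Nat.choose (n+2) (2*K-1) := by
        intro K hK
        rw [PKlTilde_rec K n hK, ih1.1 K hK]
        cases K with
        | zero => omega
        | succ K' =>
          rw [show K'+1-1 = K' from rfl, ih0.2 K']
          have e1 : 2*(K'+1)-1 = 2*K'+1 := by omega
          rw [e1]
          have hp := Nat.choose_succ_succ' (n+1) (2*K')
          rw [show n+1+1 = n+2 from rfl] at hp
          omega
      refine ⟨hP, fun K => ?_⟩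
      have h := Qcl_rec K (n+1)
      rw [show n+1+1 = n+2 from rfl] at h
      rw [h, ih1.2 K, show n+1+1 = n+2 from rfl]
      cases K with
      | zero => rw [PKlTilde_K_zero]; rfl
      | succ K' =>
        rw [hP (K'+1) (by omega)]
        have e1 : 2*(K'+1)-1 = 2*K'+1 := by omega
        have e2 : 2*(K'+1) = 2*K'+2 := by omega
        rw [e1, e2, show n+2+1 = n+3 from rfl]
        have hp := Nat.choose_succ_succ' (n+2) (2*K'+1)
        rw [show n+2+1 = n+3 from rfl, show 2*K'+1+1 = 2*K'+2 from rfl] at hp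
        omega

lemma PKlTilde_eq_choose (K ℓ : ℕ) (hK : 1 ≤ K) :
    PKlTilde K ℓ = Nat.choose ℓ (2*K-1) := (main_count ℓ).1 K hK

lemma pow_le_desc_add (ℓ : ℕ) : ∀ m : ℕ, ℓ^m ≤ ℓ.descFactorial m + m*m*ℓ^(m-1) := by
  intro m
  induction m with
  | zero => simp
  | succ m ih =>
    have hd_le : ℓ.descFactorial m ≤ ℓ^m := Nat.descFactorial_le_pow ℓ m
    have step1 : ℓ^(m+1) ≤ ℓ * ℓ.descFactorial m + m*m*(ℓ*ℓ^(m-1)) := by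
      calc ℓ^(m+1) = ℓ * ℓ^m := by ring
        _ ≤ ℓ * (ℓ.descFactorial m + m*m*ℓ^(m-1)) := Nat.mul_le_mul_left _ ih
        _ = ℓ * ℓ.descFactorial m + m*m*(ℓ*ℓ^(m-1)) := by ring
    have step2 : m*m*(ℓ*ℓ^(m-1)) ≤ m*m*ℓ^m := by
      cases m with
      | zero => simp
      | succ m' =>
        have : ℓ*ℓ^(m'+1-1) = ℓ^(m'+1) := by
          rw [show m'+1-1 = m' from rfl]
          ring
        rw [this]
    have step3 : ℓ * ℓ.descFactorial m ≤ (ℓ - m) * ℓ.descFactorial m + m * ℓ.descFactorial m := by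
      calc ℓ * ℓ.descFactorial m ≤ ((ℓ - m) + m) * ℓ.descFactorial m :=
            Nat.mul_le_mul_right _ (by omega)
        _ = (ℓ - m) * ℓ.descFactorial m + m * ℓ.descFactorial m := by ring
    have step4 : m * ℓ.descFactorial m ≤ m * ℓ^m := Nat.mul_le_mul_left _ hd_le
    have hdesc : ℓ.descFactorial (m+1) = (ℓ - m) * ℓ.descFactorial m :=
      Nat.descFactorial_succ ℓ m
    have hcoef : m * ℓ^m + m*m*ℓ^m ≤ (m+1)*(m+1)*ℓ^m := by
      have : m + m*m ≤ (m+1)*(m+1) := by nlinarith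
      calc m * ℓ^m + m*m*ℓ^m = (m + m*m) * ℓ^m := by ring
        _ ≤ (m+1)*(m+1)*ℓ^m := Nat.mul_le_mul_right _ this
    rw [show m+1-1 = m from rfl, hdesc]
    omega

/-- `P̃_{K,ℓ} = ℓ^{2K−1}/(2K−1)! + O(ℓ^{2K−2})` as `ℓ → ∞`. -/
theorem PKlTilde_asymptotics (K : ℕ) (hK : 1 ≤ K) :
    ∃ C : ℝ, 0 ≤ C ∧ ∀ ℓ : ℕ, 1 ≤ ℓ →
      |(PKlTilde K ℓ : ℝ) - (ℓ:ℝ)^(2*K - 1) / ((2*K - 1).factorial : ℝ)| ≤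
        C * (ℓ:ℝ)^(2*K - 2) := by
  set m : ℕ := 2*K - 1 with hm
  refine ⟨((m*m : ℕ) : ℝ), by positivity, fun ℓ hℓ => ?_⟩
  have hm2 : m - 1 = 2*K - 2 := by omega
  rw [PKlTilde_eq_choose K ℓ hK]
  have hfac_pos : (0:ℝ) < (m.factorial : ℝ) := by
    exact_mod_cast Nat.factorial_pos m
  have hchoose : (Nat.choose ℓ m : ℝ) = (ℓ.descFactorial m : ℝ) / (m.factorial : ℝ) := by
    rw [eq_div_iff (ne_of_gt hfac_pos)]
    rw [← Nat.cast_mul]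
    congr 1
    rw [mul_comm]
    exact (Nat.descFactorial_eq_factorial_mul_choose ℓ m).symm
  rw [hchoose]
  have hupper : (ℓ.descFactorial m : ℝ) ≤ (ℓ:ℝ)^m := by
    exact_mod_cast Nat.descFactorial_le_pow ℓ m
  have hlower : (ℓ:ℝ)^m ≤ (ℓ.descFactorial m : ℝ) + ((m*m : ℕ) : ℝ) * (ℓ:ℝ)^(m-1) := by
    have := pow_le_desc_add ℓ m
    exact_mod_cast this
  have habs : |((ℓ.descFactorial m : ℝ)) / (m.factorial : ℝ) - (ℓ:ℝ)^m / (m.factorial : ℝ)|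
      = ((ℓ:ℝ)^m - (ℓ.descFactorial m : ℝ)) / (m.factorial : ℝ) := by
    rw [div_sub_div_same, abs_div, abs_of_nonneg (le_of_lt hfac_pos),
      abs_of_nonpos (by linarith), neg_sub]
  rw [habs, ← hm2]
  have hfac1 : (1:ℝ) ≤ (m.factorial : ℝ) := by
    exact_mod_cast Nat.one_le_iff_ne_zero.mpr (Nat.factorial_ne_zero m)
  have hnum : (ℓ:ℝ)^m - (ℓ.descFactorial m : ℝ) ≤ ((m*m : ℕ) : ℝ) * (ℓ:ℝ)^(m-1) := by
    linarith
  calc ((ℓ:ℝ)^m - (ℓ.descFactorial m : ℝ)) / (m.factorial : ℝ)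
      ≤ ((m*m : ℕ) : ℝ) * (ℓ:ℝ)^(m-1) / (m.factorial : ℝ) := by
        gcongr
    _ ≤ ((m*m : ℕ) : ℝ) * (ℓ:ℝ)^(m-1) := div_le_self (by positivity) hfac1
end

section
/- Let K ∈ ℕ (K ≥ 1), 1 ≤ ℓ < L, and let N_{K,ℓ} = |{Y ⊆ [1,ℓ] : ℓ ∈ Y, cl(Y) = K}| + |{Y ⊆ [1,ℓ] : cl(Y) ≤ K−1}| (the empty set counted in the second class). Then every normalized ψ : {subsets of [1,L]} → ℂ satisfying ψ(X) = 0 whenever cl(X) > K has von Neumann entanglement entropy S(ρ₁(ψ)) ≤ log(N_{K,ℓ} + 1). -/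
/-- Configurations: subsets of the interval `[1,L]` of `ℤ`. -/
abbrev Cfg (L : ℕ) := {X : Finset ℤ // X ⊆ Finset.Icc 1 (L:ℤ)}

noncomputable instance (L : ℕ) : Fintype (Cfg L) :=
  Fintype.subtype (Finset.Icc (1:ℤ) (L:ℤ)).powerset (fun _ => Finset.mem_powerset)

/-- Union of a configuration in `[1,ℓ]` with a configuration in `[ℓ+1,L]`, viewed in `[1,L]`
(the intersection with `[1,L]` is vacuous when `ℓ ≤ L`). -/
noncomputable def joinUp (L ℓ : ℕ) (Y : Cfg ℓ) (Z : Finset ℤ) : Cfg L :=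
  ⟨(Y.1 ∪ Z) ∩ Finset.Icc 1 (L:ℤ), Finset.inter_subset_right⟩

/-- The reduced density matrix `ρ₁(ψ)` of a state `ψ` on `[1,L]`, reduced to `[1,ℓ]`:
`ρ₁(ψ)_{Y,Y'} = ∑_{Z ⊆ [ℓ+1,L]} ψ(Y ∪ Z) conj(ψ(Y' ∪ Z))`. -/
noncomputable def rho1 (L ℓ : ℕ) (ψ : Cfg L → ℂ) : Matrix (Cfg ℓ) (Cfg ℓ) ℂ :=
  fun Y Y' => ∑ Z ∈ (Finset.Icc ((ℓ:ℤ)+1) (L:ℤ)).powerset,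
    ψ (joinUp L ℓ Y Z) * (starRingEnd ℂ) (ψ (joinUp L ℓ Y' Z))

/-- Von Neumann entropy `-∑ λᵢ log λᵢ` of (the eigenvalues of) a Hermitian matrix. -/
noncomputable def vnEntropy {n : Type*} [Fintype n] [DecidableEq n] (M : Matrix n n ℂ) : ℝ :=
  if h : M.IsHermitian then -∑ i, (h.eigenvalues i) * Real.log (h.eigenvalues i) else 0

/-- `N_{K,ℓ}`: the number of subsets of `[1,ℓ]` which contain `ℓ` and have exactly `K`
clusters, plus the number of subsets of `[1,ℓ]` with at most `K−1` clusters. -/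
noncomputable def NKl (K ℓ : ℕ) : ℕ :=
  ((Finset.Icc (1:ℤ) (ℓ:ℤ)).powerset.filter (fun Y => (ℓ:ℤ) ∈ Y ∧ clZ Y = K)).card +
  ((Finset.Icc (1:ℤ) (ℓ:ℤ)).powerset.filter (fun Y => clZ Y ≤ K - 1)).card

/- ### auxiliary lemmas -/

open Finset in
lemma clZ_filter_subset {ℓ : ℤ} {Y Z : Finset ℤ} (hY : ∀ y ∈ Y, y ≤ ℓ)
    (hZ : ∀ z ∈ Z, ℓ + 1 ≤ z) :
    Y.filter (fun y => y - 1 ∉ Y) ⊆ (Y ∪ Z).filter (fun y => y - 1 ∉ Y ∪ Z) := by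
  intro y hy
  simp only [mem_filter, mem_union] at *
  obtain ⟨hyY, hy1⟩ := hy
  have := hY y hyY
  refine ⟨Or.inl hyY, ?_⟩
  rintro (h | h)
  · exact hy1 h
  · have := hZ _ h; omega

open Finset in
lemma clZ_le_union {ℓ : ℤ} {Y Z : Finset ℤ} (hY : ∀ y ∈ Y, y ≤ ℓ)
    (hZ : ∀ z ∈ Z, ℓ + 1 ≤ z) : clZ Y ≤ clZ (Y ∪ Z) :=
  Finset.card_le_card (clZ_filter_subset hY hZ)

open Finset in
lemma clZ_lt_union {ℓ : ℤ} {Y Z : Finset ℤ} (hY : ∀ y ∈ Y, y ≤ ℓ)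
    (hZ : ∀ z ∈ Z, ℓ + 1 ≤ z) (hl : ℓ ∉ Y) (hne : Z.Nonempty) :
    clZ Y + 1 ≤ clZ (Y ∪ Z) := by
  classical
  set z₀ := Z.min' hne with hz₀
  have hz₀Z : z₀ ∈ Z := Z.min'_mem hne
  have hz₀ge : ℓ + 1 ≤ z₀ := hZ _ hz₀Z
  have hmem : z₀ ∈ (Y ∪ Z).filter (fun y => y - 1 ∉ Y ∪ Z) := by
    simp only [mem_filter, mem_union]
    refine ⟨Or.inr hz₀Z, ?_⟩
    rintro (h | h)
    · have := hY _ h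
      have : z₀ - 1 = ℓ := by omega
      rw [this] at h; exact hl h
    · have := Z.min'_le _ h; omega
  have hsub : insert z₀ (Y.filter (fun y => y - 1 ∉ Y)) ⊆
      (Y ∪ Z).filter (fun y => y - 1 ∉ Y ∪ Z) := by
    intro x hx
    rcases Finset.mem_insert.mp hx with rfl | hx
    · exact hmem
    · exact clZ_filter_subset hY hZ hx
  have hnotin : z₀ ∉ Y.filter (fun y => y - 1 ∉ Y) := by
    simp only [mem_filter]
    rintro ⟨h, -⟩
    have := hY _ h; omega
  calc clZ Y + 1 = (insert z₀ (Y.filter (fun y => y - 1 ∉ Y))).card := by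
        rw [Finset.card_insert_of_notMem hnotin]; rfl
    _ ≤ _ := Finset.card_le_card hsub

open Finset in
lemma entropy_le_log {ι : Type*} [Fintype ι] (lam : ι → ℝ) (m : ℕ)
    (h0 : ∀ i, 0 ≤ lam i) (h1 : ∑ i, lam i = 1)
    (hcard : (Finset.univ.filter (fun i => lam i ≠ 0)).card ≤ m) :
    -∑ i, lam i * Real.log (lam i) ≤ Real.log m := by
  classical
  set S := Finset.univ.filter (fun i => lam i ≠ 0) with hS
  have hpos : ∀ i ∈ S, 0 < lam i := by
    intro i hi
    simp only [hS, mem_filter] at hi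
    exact lt_of_le_of_ne (h0 i) (Ne.symm hi.2)
  have hsum' : ∑ i ∈ S, lam i = 1 := by
    rw [hS, Finset.sum_filter_ne_zero, h1]
  have hSne : S.Nonempty := by
    by_contra h
    rw [Finset.not_nonempty_iff_eq_empty] at h
    rw [h, Finset.sum_empty] at hsum'
    norm_num at hsum'
  have hm1 : 1 ≤ m := le_trans (Finset.card_pos.mpr hSne) hcard
  have hmpos : (0:ℝ) < m := by positivity
  have hrestrict : ∑ i, lam i * Real.log (lam i) = ∑ i ∈ S, lam i * Real.log (lam i) := by
    rw [eq_comm]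
    apply Finset.sum_subset (Finset.filter_subset _ _)
    intro i _ hi
    simp only [hS, mem_filter, mem_univ, true_and, not_not] at hi
    rw [hi, zero_mul]
  rw [hrestrict, ← Finset.sum_neg_distrib]
  have key : ∀ i ∈ S, -(lam i * Real.log (lam i)) ≤ lam i * Real.log m + ((m:ℝ)⁻¹ - lam i) := by
    intro i hi
    have hp := hpos i hi
    have hprod : 0 < lam i * m := by positivity
    have hlog : Real.log ((lam i * m)⁻¹) ≤ (lam i * m)⁻¹ - 1 :=
      Real.log_le_sub_one_of_pos (by positivity)
    have hlogeq : Real.log ((lam i * m)⁻¹) = -Real.log (lam i) - Real.log m := by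
      rw [Real.log_inv, Real.log_mul (ne_of_gt hp) (ne_of_gt hmpos)]; ring
    have h2 : -Real.log (lam i) - Real.log m ≤ (lam i * m)⁻¹ - 1 := hlogeq ▸ hlog
    have h3 := mul_le_mul_of_nonneg_left h2 (le_of_lt hp)
    have h4 : lam i * ((lam i * m)⁻¹ - 1) = (m:ℝ)⁻¹ - lam i := by
      field_simp
    nlinarith [h3, h4]
  calc ∑ i ∈ S, -(lam i * Real.log (lam i))
      ≤ ∑ i ∈ S, (lam i * Real.log m + ((m:ℝ)⁻¹ - lam i)) := Finset.sum_le_sum key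
    _ = (∑ i ∈ S, lam i) * Real.log m + (S.card * (m:ℝ)⁻¹ - ∑ i ∈ S, lam i) := by
        rw [Finset.sum_add_distrib, Finset.sum_sub_distrib, ← Finset.sum_mul]
        simp [Finset.sum_const, nsmul_eq_mul]
    _ = Real.log m + (S.card * (m:ℝ)⁻¹ - 1) := by rw [hsum']; ring
    _ ≤ Real.log m := by
        have hc : (S.card : ℝ) ≤ m := by exact_mod_cast hcard
        have : (S.card : ℝ) * (m:ℝ)⁻¹ ≤ 1 := by
          rw [← div_eq_mul_inv, div_le_one hmpos]; exact hc
        linarith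

lemma joinUp_val {L ℓ : ℕ} (hle : ℓ ≤ L) (Y : Cfg ℓ) {Z : Finset ℤ}
    (hZ : Z ⊆ Finset.Icc ((ℓ:ℤ)+1) (L:ℤ)) : (joinUp L ℓ Y Z).1 = Y.1 ∪ Z := by
  apply Finset.inter_eq_left.mpr
  apply Finset.union_subset
  · exact Y.2.trans (Finset.Icc_subset_Icc_right (by exact_mod_cast hle))
  · exact hZ.trans (Finset.Icc_subset_Icc_left (by omega))

noncomputable def splitEquiv (L ℓ : ℕ) (hle : ℓ ≤ L) :
    Cfg ℓ × {Z // Z ∈ (Finset.Icc ((ℓ:ℤ)+1) (L:ℤ)).powerset} ≃ Cfg L where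
  toFun p := joinUp L ℓ p.1 p.2.1
  invFun X := (⟨X.1 ∩ Finset.Icc 1 (ℓ:ℤ), Finset.inter_subset_right⟩,
    ⟨X.1 ∩ Finset.Icc ((ℓ:ℤ)+1) (L:ℤ), Finset.mem_powerset.2 Finset.inter_subset_right⟩)
  left_inv := by
    rintro ⟨Y, z⟩
    have hz := Finset.mem_powerset.mp z.2
    have hj := joinUp_val hle Y hz
    have hY := Y.2
    refine Prod.ext (Subtype.ext ?_) (Subtype.ext ?_) <;> simp only [hj] <;> ext x <;>
      simp only [Finset.mem_inter, Finset.mem_union, Finset.mem_Icc]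
    · constructor
      · rintro ⟨h | h, hx⟩
        · exact h
        · have := Finset.mem_Icc.mp (hz h); omega
      · intro h
        have := Finset.mem_Icc.mp (hY h)
        exact ⟨Or.inl h, this⟩
    · constructor
      · rintro ⟨h | h, hx⟩
        · have := Finset.mem_Icc.mp (hY h); omega
        · exact h
      · intro h
        have := Finset.mem_Icc.mp (hz h)
        exact ⟨Or.inr h, this⟩
  right_inv := by
    intro X
    have hX := X.2
    apply Subtype.ext
    simp only [joinUp]
    ext x
    simp only [Finset.mem_inter, Finset.mem_union, Finset.mem_Icc]
    constructor
    · rintro ⟨⟨h, -⟩ | ⟨h, -⟩, -⟩ <;> exact h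
    · intro h
      have hx := Finset.mem_Icc.mp (hX h)
      refine ⟨?_, hx⟩
      by_cases hxl : x ≤ (ℓ:ℤ)
      · exact Or.inl ⟨h, by omega⟩
      · exact Or.inr ⟨h, by omega⟩

open Finset in
lemma card_filter_val (M : ℕ) (p : Finset ℤ → Prop) [DecidablePred p] :
    (Finset.univ.filter (fun Y : Cfg M => p Y.1)).card
      = ((Finset.Icc (1:ℤ) (M:ℤ)).powerset.filter p).card := by
  apply Finset.card_bij (fun Y _ => Y.1)
  · intro Y hY
    simp only [mem_filter, mem_univ, true_and] at hY
    exact Finset.mem_filter.mpr ⟨Finset.mem_powerset.mpr Y.2, hY⟩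
  · intro a _ b _ h
    exact Subtype.ext h
  · intro b hb
    simp only [mem_filter, Finset.mem_powerset] at hb
    exact ⟨⟨b, hb.1⟩, by simp [hb.2], rfl⟩


open scoped ComplexOrder
open Matrix
set_option maxHeartbeats 1600000

/-- every normalized state supported on configurations with at most `K`
clusters has entanglement entropy at most `log(N_{K,ℓ} + 1)`. -/
theorem ising_entropy_upper_bound
    (K : ℕ) (hK : 1 ≤ K) (ℓ L : ℕ) (h1 : 1 ≤ ℓ) (h2 : ℓ < L)
    (ψ : Cfg L → ℂ) (hnorm : (∑ X : Cfg L, ‖ψ X‖^2) = 1)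
    (hcl : ∀ X : Cfg L, K < clZ X.1 → ψ X = 0) :
    vnEntropy (rho1 L ℓ ψ) ≤ Real.log ((NKl K ℓ : ℝ) + 1) := by
  classical
  have hlL : ℓ ≤ L := h2.le
  set ZP := (Finset.Icc ((ℓ:ℤ)+1) (L:ℤ)).powerset with hZPdef
  set B : Matrix (Cfg ℓ) {Z // Z ∈ ZP} ℂ := fun Y z => ψ (joinUp L ℓ Y z.1) with hB
  have hzsub : ∀ z : {Z // Z ∈ ZP}, z.1 ⊆ Finset.Icc ((ℓ:ℤ)+1) (L:ℤ) :=
    fun z => Finset.mem_powerset.mp z.2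
  have hYbound : ∀ (Y : Cfg ℓ), ∀ y ∈ Y.1, y ≤ (ℓ:ℤ) :=
    fun Y y hy => (Finset.mem_Icc.mp (Y.2 hy)).2
  have hZbound : ∀ (z : {Z // Z ∈ ZP}), ∀ x ∈ z.1, (ℓ:ℤ)+1 ≤ x :=
    fun z x hx => (Finset.mem_Icc.mp (hzsub z hx)).1
  -- rho1 = B * Bᴴ
  have hrho : rho1 L ℓ ψ = B * Bᴴ := by
    ext Y Y'
    rw [Matrix.mul_apply,
      show rho1 L ℓ ψ Y Y'
        = ∑ Z ∈ ZP, ψ (joinUp L ℓ Y Z) * (starRingEnd ℂ) (ψ (joinUp L ℓ Y' Z)) from rfl,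
      ← Finset.sum_coe_sort ZP]
    apply Finset.sum_congr rfl
    intro z _
    rw [Matrix.conjTranspose_apply, hB]
    rfl
  have hH : (rho1 L ℓ ψ).IsHermitian := by
    rw [hrho]; exact Matrix.isHermitian_mul_conjTranspose_self B
  have hPSD : (rho1 L ℓ ψ).PosSemidef := by
    rw [hrho]; exact Matrix.posSemidef_self_mul_conjTranspose B
  -- trace = 1
  have hsum2 : ∑ p : Cfg ℓ × {Z // Z ∈ ZP}, ‖ψ (joinUp L ℓ p.1 p.2.1)‖^2 = 1 := by
    rw [← hnorm]
    exact Fintype.sum_equiv (splitEquiv L ℓ hlL) _ _ (fun p => rfl)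
  have hdiag : ∀ Y, (B * Bᴴ) Y Y
      = ((∑ z : {Z // Z ∈ ZP}, ‖ψ (joinUp L ℓ Y z.1)‖^2 : ℝ) : ℂ) := by
    intro Y
    rw [Matrix.mul_apply]
    push_cast
    apply Finset.sum_congr rfl
    intro z _
    rw [Matrix.conjTranspose_apply, hB]
    exact Complex.mul_conj' _
  have htr : (rho1 L ℓ ψ).trace = 1 := by
    rw [hrho, Matrix.trace]
    simp only [Matrix.diag_apply, hdiag]
    rw [← Complex.ofReal_sum,
      show (∑ Y : Cfg ℓ, ∑ z : {Z // Z ∈ ZP}, ‖ψ (joinUp L ℓ Y z.1)‖^2) = 1 from by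
        rw [← hsum2, Fintype.sum_prod_type]]
    norm_num
  -- sum of eigenvalues = 1
  have heig : ∑ i, hH.eigenvalues i = 1 := by
    have h := congrArg Matrix.trace hH.spectral_theorem
    rw [Unitary.conjStarAlgAut_apply, Matrix.trace_mul_cycle,
      Unitary.coe_star_mul_self,
      one_mul, Matrix.trace_diagonal, htr] at h
    have h1c : ((1:ℝ):ℂ) = ((∑ i, hH.eigenvalues i : ℝ) : ℂ) := by
      push_cast
      simpa using h
    exact_mod_cast h1c.symm
  -- rank bound
  have hrank : (rho1 L ℓ ψ).rank ≤ NKl K ℓ + 1 := by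
    rw [hrho, Matrix.rank_self_mul_conjTranspose, Matrix.rank_eq_finrank_span_row]
    set e0 : ({Z // Z ∈ ZP} → ℂ) := fun z => if z.1 = ∅ then 1 else 0 with he0
    set G : Finset (Cfg ℓ) := Finset.univ.filter
      (fun Y : Cfg ℓ => ((ℓ:ℤ) ∈ Y.1 ∧ clZ Y.1 = K) ∨ clZ Y.1 ≤ K - 1) with hG
    set T : Finset ({Z // Z ∈ ZP} → ℂ) := G.image (fun Y => B Y) ∪ {e0} with hT
    have hspan : Submodule.span ℂ (Set.range B) ≤ Submodule.span ℂ (T : Set _) := by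
      rw [Submodule.span_le]
      rintro v ⟨Y, rfl⟩
      show (B Y) ∈ _
      rcases lt_trichotomy (clZ Y.1) K with hlt | heq | hgt
      · apply Submodule.subset_span
        apply Finset.mem_coe.mpr
        apply Finset.mem_union_left
        apply Finset.mem_image_of_mem
        rw [hG, Finset.mem_filter]
        exact ⟨Finset.mem_univ _, Or.inr (by omega)⟩
      · by_cases hmem : (ℓ:ℤ) ∈ Y.1
        · apply Submodule.subset_span
          apply Finset.mem_coe.mpr
          apply Finset.mem_union_left
          apply Finset.mem_image_of_mem
          rw [hG, Finset.mem_filter]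
          exact ⟨Finset.mem_univ _, Or.inl ⟨hmem, heq⟩⟩
        · have hBY : B Y = ψ (joinUp L ℓ Y ∅) • e0 := by
            funext z
            by_cases hz : z.1 = ∅
            · have : z.1 = (∅ : Finset ℤ) := hz
              simp [hB, he0, hz, this]
            · have hzne : z.1.Nonempty := Finset.nonempty_iff_ne_empty.mpr hz
              have hz0 : ψ (joinUp L ℓ Y z.1) = 0 := by
                apply hcl
                rw [joinUp_val hlL Y (hzsub z)]
                have := clZ_lt_union (hYbound Y) (hZbound z) hmem hzne
                omega
              simp [hB, he0, hz, hz0]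
          rw [hBY]
          exact Submodule.smul_mem _ _ (Submodule.subset_span (by simp [hT]))
      · have hBY : B Y = 0 := by
          funext z
          apply hcl
          rw [joinUp_val hlL Y (hzsub z)]
          have := clZ_le_union (hYbound Y) (hZbound z)
          omega
        rw [hBY]
        exact Submodule.zero_mem _
    have hGcard : G.card = NKl K ℓ := by
      rw [hG, card_filter_val ℓ (fun Y => ((ℓ:ℤ) ∈ Y ∧ clZ Y = K) ∨ clZ Y ≤ K - 1),
        Finset.filter_or, Finset.card_union_of_disjoint, NKl]
      rw [Finset.disjoint_left]
      intro a ha hb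
      rw [Finset.mem_filter] at ha hb
      omega
    have ha : Module.finrank ℂ (Submodule.span ℂ (Set.range B))
        ≤ Module.finrank ℂ (Submodule.span ℂ (T : Set ({Z // Z ∈ ZP} → ℂ))) :=
      Submodule.finrank_mono hspan
    have hb : Module.finrank ℂ (Submodule.span ℂ (T : Set ({Z // Z ∈ ZP} → ℂ))) ≤ T.card :=
      finrank_span_finset_le_card T
    refine le_trans (le_trans ha hb) ?_
    calc T.card
        ≤ G.card + 1 := by
          refine le_trans (Finset.card_union_le _ _) ?_
          have := Finset.card_image_le (s := G) (f := fun Y => B Y)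
          simp only [Finset.card_singleton]
          omega
      _ = NKl K ℓ + 1 := by rw [hGcard]
  -- eigenvalue count
  have hcard : (Finset.univ.filter (fun i => hH.eigenvalues i ≠ 0)).card ≤ NKl K ℓ + 1 := by
    have hre := hH.rank_eq_card_non_zero_eigs
    rw [Fintype.card_subtype] at hre
    omega
  -- conclude
  rw [vnEntropy, dif_pos hH]
  have := entropy_le_log hH.eigenvalues (NKl K ℓ + 1)
    (fun i => hPSD.eigenvalues_nonneg i) heig hcard
  calc -∑ i, hH.eigenvalues i * Real.log (hH.eigenvalues i)
      ≤ Real.log ((NKl K ℓ + 1 : ℕ) : ℝ) := this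
    _ = Real.log ((NKl K ℓ : ℝ) + 1) := by push_cast; ring_nf
end

section
/- Let n ≥ 1 and let x, y : Fin n → ℤ both be strictly increasing. Then for every permutation π of Fin n: Σ_{j} |x_j − y_j| ≤ Σ_{j} |x_j − y_{π(j)}|. In other words, for two n-element subsets of ℤ, the minimum over all bijective matchings of the total displacement Σ_j |x_j − y_{π(j)}| is attained by the order-preserving matching. -/
private lemma exchange_key (a b c d : ℤ) (hab : a ≤ b) (hcd : c ≤ d) :
    |a - c| + |b - d| ≤ |a - d| + |b - c| := by
  rcases abs_cases (a - c) with ⟨h1, _⟩ | ⟨h1, _⟩ <;>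
  rcases abs_cases (b - d) with ⟨h2, _⟩ | ⟨h2, _⟩ <;>
  rcases abs_cases (a - d) with ⟨h3, _⟩ | ⟨h3, _⟩ <;>
  rcases abs_cases (b - c) with ⟨h4, _⟩ | ⟨h4, _⟩ <;>
  omega

private lemma matching_aux (n : ℕ) (x y : Fin n → ℤ) (hx : Monotone x) (hy : Monotone y) :
    ∀ N (π : Equiv.Perm (Fin n)),
      (Finset.univ.filter fun k => π k ≠ k).card = N →
      ∑ j : Fin n, |x j - y j| ≤ ∑ j : Fin n, |x j - y (π j)| := by
  intro N
  induction N using Nat.strong_induction_on with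
  | _ N ih =>
    intro π hN
    by_cases hπ : ∀ k, π k = k
    · simp only [hπ]; exact le_refl _
    push_neg at hπ
    obtain ⟨k0, hk0⟩ := hπ
    set S := Finset.univ.filter fun k => π k ≠ k with hS
    have hSne : S.Nonempty := ⟨k0, by simp [hS, hk0]⟩
    set i := S.min' hSne with hi
    have hiS : i ∈ S := S.min'_mem hSne
    have hπi : π i ≠ i := by simpa [hS] using hiS
    have hfix : ∀ k, k < i → π k = k := by
      intro k hk
      by_contra h
      have : k ∈ S := by simp [hS, h]
      exact absurd (S.min'_le k this) (not_le.mpr hk)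
    have hilt : i < π i := by
      rcases lt_trichotomy (π i) i with h | h | h
      · have := hfix (π i) h
        exact absurd (π.injective this) hπi
      · exact absurd h hπi
      · exact h
    set j := π.symm i with hj
    have hπj : π j = i := π.apply_symm_apply i
    have hij : i < j := by
      rcases lt_trichotomy j i with h | h | h
      · have := hfix j h
        rw [this] at hπj; omega
      · rw [h] at hπj; exact absurd hπj hπi
      · exact h
    have hne : i ≠ j := ne_of_lt hij
    set σ := π * Equiv.swap i j with hσ
    have hσi : σ i = i := by simp [hσ, Equiv.swap_apply_left, hπj]
    have hσj : σ j = π i := by simp [hσ, Equiv.swap_apply_right]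
    have hσk : ∀ k, k ≠ i → k ≠ j → σ k = π k := by
      intro k h1 h2
      simp [hσ, Equiv.swap_apply_of_ne_of_ne h1 h2]
    -- support of σ strictly smaller
    have hsub : (Finset.univ.filter fun k => σ k ≠ k) ⊆ S.erase i := by
      intro k hk
      simp only [Finset.mem_filter, Finset.mem_univ, true_and] at hk
      rcases eq_or_ne k i with rfl | h1
      · exact absurd hσi hk
      rcases eq_or_ne k j with rfl | h2
      · refine Finset.mem_erase.mpr ⟨h1, ?_⟩
        simp [hS]; rw [hπj]; exact hne
      · refine Finset.mem_erase.mpr ⟨h1, ?_⟩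
        simp [hS]; rw [← hσk k h1 h2]; exact hk
    have hcard : (Finset.univ.filter fun k => σ k ≠ k).card < N := by
      calc (Finset.univ.filter fun k => σ k ≠ k).card
          ≤ (S.erase i).card := Finset.card_le_card hsub
        _ < S.card := Finset.card_erase_lt_of_mem hiS
        _ = N := hN
    have step1 : ∑ j : Fin n, |x j - y j| ≤ ∑ j : Fin n, |x j - y (σ j)| :=
      ih _ hcard σ rfl
    have step2 : ∑ k : Fin n, |x k - y (σ k)| ≤ ∑ k : Fin n, |x k - y (π k)| := by
      rw [← sub_nonneg, ← Finset.sum_sub_distrib]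
      have hzero : ∀ k ∈ Finset.univ \ ({i, j} : Finset (Fin n)),
          |x k - y (π k)| - |x k - y (σ k)| = 0 := by
        intro k hk
        simp only [Finset.mem_sdiff, Finset.mem_insert, Finset.mem_singleton] at hk
        push_neg at hk
        rw [hσk k hk.2.1 hk.2.2]; ring
      have : ∑ k : Fin n, (|x k - y (π k)| - |x k - y (σ k)|)
          = ∑ k ∈ ({i, j} : Finset (Fin n)), (|x k - y (π k)| - |x k - y (σ k)|) := by
        refine (Finset.sum_subset (Finset.subset_univ _) ?_).symm
        intro k _ hk
        exact hzero k (by simp_all)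
      rw [this, Finset.sum_pair hne, hσi, hσj, hπj]
      have := exchange_key (x i) (x j) (y i) (y (π i))
        (hx hij.le) (hy hilt.le)
      omega

    linarith

/-- for strictly increasing `x, y : Fin n → ℤ` and any permutation `π`,
the order-preserving matching minimizes the total displacement:
`Σ_j |x_j − y_j| ≤ Σ_j |x_j − y_{π(j)}|`. -/
theorem ordered_matching_minimizes (n : ℕ) (hn : 1 ≤ n)
    (x y : Fin n → ℤ) (hx : StrictMono x) (hy : StrictMono y)
    (π : Equiv.Perm (Fin n)) :
    ∑ j : Fin n, |x j - y j| ≤ ∑ j : Fin n, |x j - y (π j)| :=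
  matching_aux n x y hx.monotone hy.monotone _ π rfl
end

section
/- Let L ≥ 1 and let V = {v₁ < … < v_n} ⊆ [1,L] be an n-element configuration with cl(V) ≥ 2. Let 1 ≤ j < n be the index such that {v_{j+1}, …, v_n} is the rightmost connected component of V (i.e. v_{i+1} = v_i + 1 for all j+1 ≤ i ≤ n−1, and v_{j+1} > v_j + 1). Define V′ = {v₁, …, v_j} ∪ {v_{j+1} − 1, …, v_n − 1} (the rightmost component shifted left by one; note V′ ⊆ [1,L]). Then for every K ∈ ℕ (K ≥ 1): d_n(V′, V_{n,K}) ≤ d_n(V, V_{n,K}). -/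
/-- Configuration distance between two `n`-element subsets of `ℤ`:
sum of `|x_j − y_j|` over the increasing enumerations. -/
def confDist (X Y : Finset ℤ) : ℕ :=
  (List.zipWith (fun a b => (a - b).natAbs) (X.sort (· ≤ ·)) (Y.sort (· ≤ ·))).sum

/-- Distance from a configuration to a family of configurations. -/
noncomputable def distToFam (X : Finset ℤ) (B : Set (Finset ℤ)) : ℕ :=
  sInf {d : ℕ | ∃ Y ∈ B, d = confDist X Y}

/-- Distance between two families of configurations. -/
noncomputable def famDist (A B : Set (Finset ℤ)) : ℕ :=
  sInf {d : ℕ | ∃ X ∈ A, ∃ Y ∈ B, d = confDist X Y}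

/-- `V_{n,K}`: the `n`-element subsets of `[1,L]` with at most `K` clusters. -/
def VleK (L n K : ℕ) : Set (Finset ℤ) :=
  {X | X ⊆ Finset.Icc 1 (L:ℤ) ∧ X.card = n ∧ clZ X ≤ K}

lemma zipWith_ofFn' {α β γ : Type*} (f : α → β → γ) : ∀ {n : ℕ} (a : Fin n → α) (b : Fin n → β),
    List.zipWith f (List.ofFn a) (List.ofFn b) = List.ofFn (fun i => f (a i) (b i))
  | 0, _, _ => rfl
  | n+1, a, b => by
    rw [List.ofFn_succ, List.ofFn_succ, List.ofFn_succ, List.zipWith_cons_cons,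
      zipWith_ofFn' f _ _]

lemma sort_image_eq_ofFn {n : ℕ} (w : Fin n → ℤ) (hw : StrictMono w) :
    (Finset.image w Finset.univ).sort (· ≤ ·) = List.ofFn w := by
  apply List.Perm.eq_of_sortedLE (List.Pairwise.sortedLE (Finset.pairwise_sort _ _))
    (List.sortedLE_ofFn_iff.mpr hw.monotone)
  have hnd : (List.ofFn w).Nodup := List.nodup_ofFn.mpr hw.injective
  apply List.perm_of_nodup_nodup_toFinset_eq (Finset.sort_nodup _ _) hnd
  rw [Finset.sort_toFinset]
  ext x
  simp [List.mem_ofFn, Set.range]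

lemma confDist_image {n : ℕ} (a b : Fin n → ℤ) (ha : StrictMono a) (hb : StrictMono b) :
    (List.zipWith (fun x y => (x - y).natAbs) ((Finset.image a Finset.univ).sort (· ≤ ·))
      ((Finset.image b Finset.univ).sort (· ≤ ·))).sum = ∑ i : Fin n, (a i - b i).natAbs := by
  rw [sort_image_eq_ofFn a ha, sort_image_eq_ofFn b hb, zipWith_ofFn',
    ← Fin.sum_ofFn]

lemma strictMono_gap' {n : ℕ} (w : Fin n → ℤ) (hw : StrictMono w) (a : Fin n) :
    ∀ (d : ℕ) (h : (a:ℕ) + d < n), w a + (d:ℤ) ≤ w ⟨(a:ℕ)+d, h⟩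
  | 0, h => by simp
  | d+1, h => by
    have h1 := strictMono_gap' w hw a d (by omega)
    have h2 : w ⟨(a:ℕ)+d, by omega⟩ < w ⟨(a:ℕ)+d+1, by omega⟩ := hw (by simp [Fin.lt_def])
    have h3 : w ⟨(a:ℕ)+(d+1), h⟩ = w ⟨(a:ℕ)+d+1, by omega⟩ := rfl
    push_cast
    omega

lemma strictMono_gap {n : ℕ} (w : Fin n → ℤ) (hw : StrictMono w) (a b : Fin n)
    (hab : (a:ℕ) ≤ b) : w a + (((b:ℕ) - (a:ℕ) : ℕ) : ℤ) ≤ w b := by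
  have h1 := strictMono_gap' w hw a ((b:ℕ) - (a:ℕ)) (by omega)
  have hb : b = ⟨(a:ℕ) + ((b:ℕ) - (a:ℕ)), by omega⟩ := by ext; simp; omega
  rw [hb]
  simpa using h1

lemma clZ_image {n : ℕ} (w : Fin n → ℤ) (hw : Function.Injective w) :
    clZ (Finset.image w Finset.univ) =
      (Finset.univ.filter fun k : Fin n => w k - 1 ∉ Finset.image w Finset.univ).card := by
  unfold clZ
  rw [Finset.filter_image, Finset.card_image_of_injective _ hw]

lemma pred_mem_iff {n : ℕ} (w : Fin n → ℤ) (hw : StrictMono w) (k : Fin n) :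
    w k - 1 ∈ Finset.image w Finset.univ ↔
      ∃ _ : 0 < (k:ℕ), w ⟨(k:ℕ)-1, by omega⟩ = w k - 1 := by
  constructor
  · intro h
    simp only [Finset.mem_image, Finset.mem_univ, true_and] at h
    obtain ⟨m, hm⟩ := h
    have hmk : m < k := by
      by_contra hc
      have := hw.monotone (not_lt.mp hc)
      omega
    have hk0 : 0 < (k:ℕ) := by
      rcases Nat.eq_zero_or_pos (k:ℕ) with h0 | h0
      · exact absurd (show (m:ℕ) < (k:ℕ) from hmk) (by omega)
      · exact h0
    refine ⟨hk0, ?_⟩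
    have h1 : w m ≤ w ⟨(k:ℕ)-1, by omega⟩ := hw.monotone (by simp [Fin.le_def]; omega)
    have h2 : w ⟨(k:ℕ)-1, by omega⟩ < w k := hw (by simp [Fin.lt_def]; omega)
    omega
  · rintro ⟨hk0, hk⟩
    simp only [Finset.mem_image, Finset.mem_univ, true_and]
    exact ⟨_, hk⟩

lemma v_consec {n : ℕ} (v : Fin n → ℤ) (j : ℕ) (hj2 : j < n)
    (hconsec : ∀ (i : ℕ) (hji : j ≤ i) (hin : i + 1 < n),
      v ⟨i+1, hin⟩ = v ⟨i, by omega⟩ + 1) :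
    ∀ (d : ℕ) (h : j + d < n), v ⟨j + d, h⟩ = v ⟨j, hj2⟩ + d
  | 0, h => by simp
  | d+1, h => by
    have h1 := v_consec v j hj2 hconsec d (by omega)
    have h2 := hconsec (j+d) (by omega) h
    have h3 : v ⟨j + (d+1), h⟩ = v ⟨j + d + 1, by omega⟩ := rfl
    push_cast
    omega

lemma exists_minimal (P : ℕ → Prop) (h : ∃ i, P i) : ∃ i, P i ∧ ∀ m, m < i → ¬ P m := by
  classical
  exact ⟨Nat.find h, Nat.find_spec h, fun m hm => Nat.find_min h hm⟩

lemma confDist_image' {n : ℕ} (a b : Fin n → ℤ) (ha : StrictMono a) (hb : StrictMono b) :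
    confDist (Finset.image a Finset.univ) (Finset.image b Finset.univ)
      = ∑ i : Fin n, (a i - b i).natAbs :=
  confDist_image a b ha hb

lemma clZ_mono {n : ℕ} (y y' : Fin n → ℤ) (hy : StrictMono y) (hy' : StrictMono y')
    (h : ∀ k : Fin n, y k - 1 ∈ Finset.image y Finset.univ →
      y' k - 1 ∈ Finset.image y' Finset.univ) :
    clZ (Finset.image y' Finset.univ) ≤ clZ (Finset.image y Finset.univ) := by
  rw [clZ_image _ hy'.injective, clZ_image _ hy.injective]
  apply Finset.card_le_card
  intro k hk
  simp only [Finset.mem_filter, Finset.mem_univ, true_and] at hk ⊢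
  exact fun hc => hk (h k hc)

/-- shifting the rightmost connected component of a configuration one step
to the left does not increase the distance to the at-most-`K`-cluster configurations.
Here `V = {v₀ < … < v_{n−1}} ⊆ [1,L]` (0-indexed), with rightmost component
`{v_j, …, v_{n−1}}` for some `1 ≤ j < n` (consecutive entries from index `j` on, and a gap
before index `j`), and `V′` is obtained by decreasing `v_i` by one for `i ≥ j`. -/
theorem shift_rightmost_component
    (L n : ℕ) (hL : 1 ≤ L) (v : Fin n → ℤ) (hv : StrictMono v)
    (hrange : ∀ i : Fin n, 1 ≤ v i ∧ v i ≤ (L:ℤ))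
    (j : ℕ) (hj1 : 1 ≤ j) (hj2 : j < n)
    (hconsec : ∀ (i : ℕ) (hji : j ≤ i) (hin : i + 1 < n),
      v ⟨i+1, hin⟩ = v ⟨i, by omega⟩ + 1)
    (hgap : v ⟨j-1, by omega⟩ + 1 < v ⟨j, hj2⟩)
    (K : ℕ) (hK : 1 ≤ K) :
    distToFam (Finset.image (fun i : Fin n => if (i:ℕ) < j then v i else v i - 1) Finset.univ)
        (VleK L n K)
      ≤ distToFam (Finset.image v Finset.univ) (VleK L n K) := by
  classical
  set v' : Fin n → ℤ := fun i : Fin n => if (i:ℕ) < j then v i else v i - 1 with hv'def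
  -- general fact about v
  have hvc : ∀ (i : ℕ) (h : i < n), j ≤ i → v ⟨i,h⟩ = v ⟨j,hj2⟩ + ((i-j:ℕ):ℤ) := by
    intro i h hji
    have h1 := v_consec v j hj2 hconsec (i-j) (by omega)
    have he : (⟨i,h⟩ : Fin n) = ⟨j+(i-j), by omega⟩ := by ext; simp; omega
    rw [he, h1]
  have hv' : StrictMono v' := by
    intro a b hab
    have h1 : v a < v b := hv hab
    have hab' : (a:ℕ) < (b:ℕ) := hab
    simp only [hv'def]
    split_ifs with ha hb hb
    · exact h1
    · -- a < j ≤ b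
      have h2 : v a ≤ v ⟨j-1, by omega⟩ := hv.monotone (by simp [Fin.le_def]; omega)
      have h3 : v ⟨j, hj2⟩ ≤ v b := hv.monotone (by simp [Fin.le_def]; omega)
      omega
    · omega
    · omega
  -- unfold distToFam
  by_cases hS : {d : ℕ | ∃ Y ∈ VleK L n K, d = confDist (Finset.image v Finset.univ) Y}.Nonempty
  · have hmem := Nat.sInf_mem hS
    obtain ⟨Y, hYB, hYd⟩ := hmem
    suffices h : ∃ Y' ∈ VleK L n K,
        confDist (Finset.image v' Finset.univ) Y' ≤ confDist (Finset.image v Finset.univ) Y by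
      obtain ⟨Y', hY'B, hle⟩ := h
      calc distToFam (Finset.image v' Finset.univ) (VleK L n K)
          ≤ confDist (Finset.image v' Finset.univ) Y' := Nat.sInf_le ⟨Y', hY'B, rfl⟩
        _ ≤ confDist (Finset.image v Finset.univ) Y := hle
        _ = distToFam (Finset.image v Finset.univ) (VleK L n K) := hYd.symm
    obtain ⟨hYsub, hYcard, hYcl⟩ := hYB
    -- the increasing enumeration of Y
    set e := Y.orderIsoOfFin hYcard with hedef
    set y : Fin n → ℤ := fun k => (e k : ℤ) with hydef
    have hy : StrictMono y := fun a b hab => by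
      simpa [hydef] using (Subtype.coe_lt_coe).mpr (e.strictMono hab)
    have hYeq : Finset.image y Finset.univ = Y := by
      apply Finset.eq_of_subset_of_card_le
      · intro x hx
        simp only [Finset.mem_image] at hx
        obtain ⟨k, _, rfl⟩ := hx
        exact (e k).2
      · rw [Finset.card_image_of_injective _ hy.injective, Finset.card_univ,
          Fintype.card_fin, hYcard]
    have hrY : ∀ k : Fin n, 1 ≤ y k ∧ y k ≤ (L:ℤ) := by
      intro k
      have := hYsub (hYeq ▸ Finset.mem_image_of_mem y (Finset.mem_univ k))
      simpa using Finset.mem_Icc.mp this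
    have hconfV : confDist (Finset.image v Finset.univ) Y = ∑ k : Fin n, (v k - y k).natAbs := by
      rw [← hYeq]; exact confDist_image' v y hv hy
    by_cases hex : ∃ k : Fin n, j ≤ (k:ℕ) ∧ v k ≤ y k
    · -- hard case: some y k ≥ v k beyond j; shift part of Y left
      have hjpred : j - 1 < n := by omega
      have hgap' : v ⟨j-1, hjpred⟩ + 1 < v ⟨j, hj2⟩ := hgap
      have hexN : ∃ i : ℕ, ∃ h : i < n, j ≤ i ∧ v ⟨i,h⟩ ≤ y ⟨i,h⟩ := by
        obtain ⟨k0, hk0j, hk0vy⟩ := hex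
        exact ⟨(k0:ℕ), k0.isLt, hk0j, hk0vy⟩
      obtain ⟨i0, ⟨hi0n, hji0, hvy0⟩, hi0minraw⟩ := exists_minimal _ hexN
      have hi0min : ∀ (i : ℕ) (h : i < n), j ≤ i → i < i0 → y ⟨i,h⟩ < v ⟨i,h⟩ := by
        intro i h hji hii0
        exact lt_of_not_ge fun hc => hi0minraw i hii0 ⟨h, hji, hc⟩
      have hexQ : ∃ i : ℕ, ∃ h : i < n, i ≤ i0 ∧
          y ⟨i0,hi0n⟩ - y ⟨i,h⟩ = ((i0 - i:ℕ):ℤ) := ⟨i0, hi0n, le_refl _, by simp⟩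
      obtain ⟨i1, ⟨hi1n, hi1le, hyi1⟩, hi1minraw⟩ := exists_minimal _ hexQ
      have hi1pred : 0 < i1 → i1 - 1 < n := by omega
      have hgap1 : ∀ hpos : 0 < i1, y ⟨i1-1, hi1pred hpos⟩ ≤ y ⟨i1, hi1n⟩ - 2 := by
        intro hpos
        have h1 : y ⟨i0,hi0n⟩ - y ⟨i1-1, hi1pred hpos⟩ ≠ ((i0 - (i1-1):ℕ):ℤ) :=
          fun hb => hi1minraw (i1-1) (by omega) ⟨hi1pred hpos, by omega, hb⟩
        have h2 : y ⟨i1-1, hi1pred hpos⟩ + ((i0 - (i1-1):ℕ):ℤ) ≤ y ⟨i0,hi0n⟩ := by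
          simpa using strictMono_gap y hy ⟨i1-1, hi1pred hpos⟩ ⟨i0,hi0n⟩ (by simp; omega)
        have h3 : y ⟨i1-1, hi1pred hpos⟩ < y ⟨i1, hi1n⟩ := hy (by simp [Fin.lt_def]; omega)
        omega
      have hclus : ∀ (i:ℕ) (h : i < n), i1 ≤ i → i ≤ i0 →
          y ⟨i0,hi0n⟩ - y ⟨i,h⟩ = ((i0 - i:ℕ):ℤ) := by
        intro i h hi1i hii0
        have h1 : y ⟨i1,hi1n⟩ + ((i - i1:ℕ):ℤ) ≤ y ⟨i,h⟩ := by
          simpa using strictMono_gap y hy ⟨i1,hi1n⟩ ⟨i,h⟩ (by simpa using hi1i)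
        have h2 : y ⟨i,h⟩ + ((i0 - i:ℕ):ℤ) ≤ y ⟨i0,hi0n⟩ := by
          simpa using strictMono_gap y hy ⟨i,h⟩ ⟨i0,hi0n⟩ (by simpa using hii0)
        omega
      have hM1 : ∀ (k:ℕ) (h : k < n), i1 ≤ k → k < j → v ⟨k,h⟩ + 1 ≤ y ⟨k,h⟩ := by
        intro k h hik hkj
        have hi0j : i0 = j := by
          by_contra hne
          have hlt : j < i0 := by omega
          have hpred : i0 - 1 < n := by omega
          have h1 : y ⟨i0,hi0n⟩ - y ⟨i0-1, hpred⟩ = ((i0-(i0-1):ℕ):ℤ) :=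
            hclus (i0-1) hpred (by omega) (by omega)
          have h2 : v ⟨i0-1,hpred⟩ = v ⟨j,hj2⟩ + ((i0-1-j:ℕ):ℤ) := hvc (i0-1) hpred (by omega)
          have h3 : v ⟨i0,hi0n⟩ = v ⟨j,hj2⟩ + ((i0-j:ℕ):ℤ) := hvc i0 hi0n (by omega)
          have h4 := hi0min (i0-1) hpred (by omega) (by omega)
          omega
        have h1 : y ⟨i0,hi0n⟩ - y ⟨k,h⟩ = ((i0-k:ℕ):ℤ) := hclus k h hik (by omega)
        have h2 : v ⟨k,h⟩ + ((j-1-k:ℕ):ℤ) ≤ v ⟨j-1, hjpred⟩ := by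
          simpa using strictMono_gap v hv ⟨k,h⟩ ⟨j-1,hjpred⟩ (by simp; omega)
        have h3 : v ⟨i0,hi0n⟩ = v ⟨j,hj2⟩ := by
          congr 1
          ext
          simpa using hi0j
        omega
      set yf : Fin n → ℤ := fun k => if (k:ℕ) < i1 then y k else y k - 1 with hyfdef
      have hy1ge2 : 2 ≤ y ⟨i1, hi1n⟩ := by
        by_cases hc : i1 < j
        · have h1 := hM1 i1 hi1n (le_refl _) hc
          have h2 := (hrange ⟨i1,hi1n⟩).1
          omega
        · have h1 : y ⟨i0,hi0n⟩ - y ⟨i1,hi1n⟩ = ((i0-i1:ℕ):ℤ) := hclus i1 hi1n (le_refl _) hi1le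
          have h2 : v ⟨i0,hi0n⟩ = v ⟨j,hj2⟩ + ((i0-j:ℕ):ℤ) := hvc i0 hi0n (by omega)
          have h4 := (hrange ⟨j-1, hjpred⟩).1
          omega
      have hyf : StrictMono yf := by
        intro a b hab
        have h1 : y a < y b := hy hab
        have hab' : (a:ℕ) < (b:ℕ) := hab
        simp only [hyfdef]
        split_ifs with ha hb hb
        · exact h1
        · have hpos : 0 < i1 := by omega
          have h2 : y a ≤ y ⟨i1-1, hi1pred hpos⟩ := hy.monotone (by simp [Fin.le_def]; omega)
          have h3 := hgap1 hpos
          have h4 : y ⟨i1,hi1n⟩ ≤ y b := hy.monotone (by simp [Fin.le_def]; omega)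
          omega
        · omega
        · omega
      have hr' : ∀ k : Fin n, 1 ≤ yf k ∧ yf k ≤ (L:ℤ) := by
        intro k
        have h0 := hrY k
        simp only [hyfdef]
        split_ifs with hk
        · exact h0
        · have h1 : y ⟨i1,hi1n⟩ ≤ y k := hy.monotone (by simp [Fin.le_def]; omega)
          omega
      have hclY : clZ (Finset.image y Finset.univ) ≤ K := by rw [hYeq]; exact hYcl
      have hcl' : clZ (Finset.image yf Finset.univ) ≤ K := by
        refine le_trans (clZ_mono y yf hy hyf ?_) hclY
        intro k hk
        rw [pred_mem_iff y hy] at hk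
        obtain ⟨hk0, hkeq⟩ := hk
        rw [pred_mem_iff yf hyf]
        refine ⟨hk0, ?_⟩
        simp only [hyfdef]
        by_cases h1 : (k:ℕ) < i1
        · rw [if_pos (by first | omega | (simp; omega)), if_pos h1]
          exact hkeq
        · by_cases h2 : (k:ℕ) = i1
          · exfalso
            have hpos : 0 < i1 := by omega
            have he1 : (⟨(k:ℕ)-1, by omega⟩ : Fin n) = ⟨i1-1, hi1pred hpos⟩ := by
              ext; simp; omega
            have he2 : k = (⟨i1, hi1n⟩ : Fin n) := by ext; simpa using h2
            rw [he1, he2] at hkeq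
            have h3 := hgap1 hpos
            omega
          · rw [if_neg (by first | omega | (simp; omega)), if_neg h1]
            omega
      refine ⟨Finset.image yf Finset.univ, ⟨?_, ?_, hcl'⟩, ?_⟩
      · intro x hx
        simp only [Finset.mem_image] at hx
        obtain ⟨k, _, rfl⟩ := hx
        exact Finset.mem_Icc.mpr ⟨(hr' k).1, (hr' k).2⟩
      · rw [Finset.card_image_of_injective _ hyf.injective, Finset.card_univ, Fintype.card_fin]
      · rw [hconfV, confDist_image' v' yf hv' hyf]
        apply Finset.sum_le_sum
        intro k _
        simp only [hv'def, hyfdef]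
        by_cases hk1 : (k:ℕ) < i1 <;> by_cases hk2 : (k:ℕ) < j
        · rw [if_pos hk1, if_pos hk2]
        · rw [if_pos hk1, if_neg hk2]
          have h3 := hi0min (k:ℕ) k.isLt (by omega) (by omega)
          simp only [Fin.eta] at h3
          omega
        · rw [if_neg hk1, if_pos hk2]
          have h3 := hM1 (k:ℕ) k.isLt (by omega) hk2
          simp only [Fin.eta] at h3
          omega
        · rw [if_neg hk1, if_neg hk2]
          omega

    · -- easy case: Y itself works
      push_neg at hex
      refine ⟨Y, ⟨hYsub, hYcard, hYcl⟩, ?_⟩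
      rw [hconfV, ← hYeq, confDist_image' v' y hv' hy]
      apply Finset.sum_le_sum
      intro k _
      by_cases hk : (k:ℕ) < j
      · simp [hv'def, hk]
      · have h1 : y k < v k := hex k (by omega)
        simp only [hv'def, if_neg hk]
        omega
  · rw [Set.not_nonempty_iff_eq_empty] at hS
    have hB : VleK L n K = ∅ := by
      by_contra hc
      rw [← Set.not_nonempty_iff_eq_empty] at hc
      push_neg at hc
      obtain ⟨Y, hY⟩ := hc
      exact absurd (Set.mem_setOf.mpr ⟨Y, hY, rfl⟩) (hS ▸ Set.notMem_empty _)
    unfold distToFam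
    rw [hB]
    simp [Nat.sInf_empty]
end

section
/- Let 1 ≤ ℓ < L, let Y ⊆ [1,ℓ] with 1 ≤ |Y| ≤ ℓ − 1, and for 1 ≤ k ≤ L − ℓ set Y^{(k)} = Y ∪ {ℓ+1, …, ℓ+k}. Then for every K ∈ ℕ (K ≥ 1), the sequence k ↦ d_{|Y|+k}( Y^{(k)}, V_{|Y|+k, K} ) is non-decreasing in k on 1 ≤ k ≤ L − ℓ; in particular its minimum over 1 ≤ k ≤ L − ℓ is attained at k = 1. -/
lemma sort_insert_max (X : Finset ℤ) (m : ℤ) (hm : ∀ x ∈ X, x < m) :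
    (insert m X).sort (· ≤ ·) = X.sort (· ≤ ·) ++ [m] := by
  have hmX : m ∉ X := fun h => lt_irrefl m (hm m h)
  refine (fun hp h1 h2 => List.Perm.eq_of_sortedLE (List.sortedLE_iff_pairwise.mpr h1)
    (List.sortedLE_iff_pairwise.mpr h2) hp) ?_ ?_ ?_
  · have p1 : List.Perm ((insert m X).sort (· ≤ ·)) ((insert m X).toList) :=
      Finset.sort_perm_toList _ _
    have p2 : List.Perm ((insert m X).toList) (m :: X.toList) := Finset.toList_insert hmX
    have p3 : List.Perm (m :: X.toList) (m :: X.sort (· ≤ ·)) :=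
      List.Perm.cons m (Finset.sort_perm_toList _ _).symm
    have p4 : List.Perm (m :: X.sort (· ≤ ·)) (X.sort (· ≤ ·) ++ [m]) :=
      (List.perm_append_singleton _ _).symm
    exact ((p1.trans p2).trans p3).trans p4
  · exact Finset.pairwise_sort _ _
  · rw [List.pairwise_append]
    refine ⟨Finset.pairwise_sort _ _, List.pairwise_singleton _ m, ?_⟩
    intro a ha b hb
    rw [List.mem_singleton] at hb
    subst hb
    exact le_of_lt (hm a ((Finset.mem_sort (· ≤ ·)).mp ha))

lemma sort_erase_max (Z : Finset ℤ) (hZ : Z.Nonempty) :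
    Z.sort (· ≤ ·) = (Z.erase (Z.max' hZ)).sort (· ≤ ·) ++ [Z.max' hZ] := by
  have h1 : insert (Z.max' hZ) (Z.erase (Z.max' hZ)) = Z :=
    Finset.insert_erase (Z.max'_mem hZ)
  have := sort_insert_max (Z.erase (Z.max' hZ)) (Z.max' hZ)
    (fun x hx => lt_of_le_of_ne (Z.le_max' x (Finset.mem_of_mem_erase hx))
      (Finset.ne_of_mem_erase hx))
  rw [h1] at this
  exact this

lemma confDist_erase_max_le (X Z : Finset ℤ) (m : ℤ) (hm : ∀ x ∈ X, x < m)
    (hZ : Z.Nonempty) (hcard : X.card + 1 = Z.card) :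
    confDist X (Z.erase (Z.max' hZ)) ≤ confDist (insert m X) Z := by
  have hlen : (X.sort (· ≤ ·)).length = ((Z.erase (Z.max' hZ)).sort (· ≤ ·)).length := by
    rw [Finset.length_sort, Finset.length_sort, Finset.card_erase_of_mem (Z.max'_mem hZ)]
    omega
  rw [confDist, confDist, sort_insert_max X m hm, sort_erase_max Z hZ,
    List.zipWith_append hlen, List.sum_append]
  exact Nat.le_add_right _ _

lemma clZ_erase_max_le (Z : Finset ℤ) (hZ : Z.Nonempty) :
    clZ (Z.erase (Z.max' hZ)) ≤ clZ Z := by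
  apply Finset.card_le_card
  intro y hy
  simp only [Finset.mem_filter, Finset.mem_erase] at hy ⊢
  obtain ⟨⟨hyne, hyZ⟩, hy1⟩ := hy
  refine ⟨hyZ, fun h => hy1 ⟨?_, h⟩⟩
  have : y < Z.max' hZ := lt_of_le_of_ne (Z.le_max' y hyZ) hyne
  omega

lemma distToFam_mono_aux (X X' : Finset ℤ) (B B' : Set (Finset ℤ)) (hne : B'.Nonempty)
    (h : ∀ Z ∈ B', ∃ Z' ∈ B, confDist X Z' ≤ confDist X' Z) :
    distToFam X B ≤ distToFam X' B' := by
  obtain ⟨Z0, hZ0⟩ := hne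
  have hS' : {d : ℕ | ∃ W ∈ B', d = confDist X' W}.Nonempty := ⟨_, Z0, hZ0, rfl⟩
  obtain ⟨Z, hZ, hd⟩ := Nat.sInf_mem hS'
  obtain ⟨Z', hZ', hle⟩ := h Z hZ
  calc distToFam X B ≤ confDist X Z' := Nat.sInf_le ⟨Z', hZ', rfl⟩
    _ ≤ confDist X' Z := hle
    _ = distToFam X' B' := hd.symm

lemma VleK_nonempty (L n K : ℕ) (hn : n ≤ L) (hK : 1 ≤ K) : (VleK L n K).Nonempty := by
  refine ⟨Finset.Icc 1 (n:ℤ), ?_, ?_, ?_⟩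
  · exact Finset.Icc_subset_Icc_right (by exact_mod_cast hn)
  · rw [Int.card_Icc]; omega
  · calc clZ (Finset.Icc 1 (n:ℤ)) ≤ ({1} : Finset ℤ).card := by
          apply Finset.card_le_card
          intro y hy
          simp only [clZ, Finset.mem_filter, Finset.mem_Icc, Finset.mem_singleton] at hy ⊢
          omega
      _ ≤ K := by simpa using hK

lemma card_Yk (ℓ : ℕ) (Y : Finset ℤ) (hY : Y ⊆ Finset.Icc 1 (ℓ:ℤ)) (k : ℕ) :
    (Y ∪ Finset.Icc ((ℓ:ℤ)+1) ((ℓ:ℤ)+(k:ℤ))).card = Y.card + k := by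
  rw [Finset.card_union_of_disjoint, Int.card_Icc]
  · omega
  · rw [Finset.disjoint_left]
    intro a ha ha'
    have := hY ha
    simp only [Finset.mem_Icc] at this ha'
    omega

lemma main_step (ℓ L : ℕ) (Y : Finset ℤ) (hY : Y ⊆ Finset.Icc 1 (ℓ:ℤ))
    (k : ℕ) (hk : Y.card + (k+1) ≤ L) (K : ℕ) (hK : 1 ≤ K) :
    distToFam (Y ∪ Finset.Icc ((ℓ:ℤ)+1) ((ℓ:ℤ)+(k:ℤ))) (VleK L (Y.card + k) K) ≤
      distToFam (Y ∪ Finset.Icc ((ℓ:ℤ)+1) ((ℓ:ℤ)+(k:ℤ)+1)) (VleK L (Y.card + (k+1)) K) := by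
  set X := Y ∪ Finset.Icc ((ℓ:ℤ)+1) ((ℓ:ℤ)+(k:ℤ)) with hX
  have hins : Y ∪ Finset.Icc ((ℓ:ℤ)+1) ((ℓ:ℤ)+(k:ℤ)+1) = insert ((ℓ:ℤ)+(k:ℤ)+1) X := by
    ext a
    simp only [hX, Finset.mem_union, Finset.mem_Icc, Finset.mem_insert]
    constructor
    · rintro (h | h)
      · exact Or.inr (Or.inl h)
      · rcases eq_or_lt_of_le h.2 with he | hl
        · exact Or.inl he
        · exact Or.inr (Or.inr ⟨h.1, by omega⟩)
    · rintro (h | h | h)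
      · exact Or.inr ⟨by omega, by omega⟩
      · exact Or.inl h
      · exact Or.inr ⟨h.1, by omega⟩
  have hm : ∀ x ∈ X, x < (ℓ:ℤ)+(k:ℤ)+1 := by
    intro x hx
    rcases Finset.mem_union.mp hx with h | h
    · have := hY h; simp only [Finset.mem_Icc] at this; omega
    · simp only [Finset.mem_Icc] at h; omega
  have hXcard : X.card = Y.card + k := card_Yk ℓ Y hY k
  apply distToFam_mono_aux
  · exact VleK_nonempty L _ K hk hK
  · intro Z hZ
    obtain ⟨hZsub, hZcard, hZcl⟩ := hZ
    have hZne : Z.Nonempty := Finset.card_pos.mp (by omega)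
    refine ⟨Z.erase (Z.max' hZne), ⟨?_, ?_, ?_⟩, ?_⟩
    · exact (Finset.erase_subset _ _).trans hZsub
    · rw [Finset.card_erase_of_mem (Z.max'_mem hZne), hZcard]; omega
    · exact le_trans (clZ_erase_max_le Z hZne) hZcl
    · rw [hins]
      exact confDist_erase_max_le X Z _ hm hZne (by omega)

/-- the distances `d_{|Y|+k}(Y^{(k)}, V_{|Y|+k,K})`, with
`Y^{(k)} = Y ∪ {ℓ+1,…,ℓ+k}`, are non-decreasing in `k` on `1 ≤ k ≤ L − ℓ`;
in particular the minimum over `1 ≤ k ≤ L − ℓ` is attained at `k = 1`. -/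
theorem dist_nondecreasing_in_k
    (ℓ L : ℕ) (h1 : 1 ≤ ℓ) (h2 : ℓ < L)
    (Y : Finset ℤ) (hY : Y ⊆ Finset.Icc 1 (ℓ:ℤ)) (hY1 : 1 ≤ Y.card) (hY2 : Y.card ≤ ℓ - 1)
    (K : ℕ) (hK : 1 ≤ K) :
    (∀ k : ℕ, 1 ≤ k → k + 1 ≤ L - ℓ →
      distToFam (Y ∪ Finset.Icc ((ℓ:ℤ)+1) ((ℓ:ℤ)+(k:ℤ))) (VleK L (Y.card + k) K) ≤
        distToFam (Y ∪ Finset.Icc ((ℓ:ℤ)+1) ((ℓ:ℤ)+(k:ℤ)+1)) (VleK L (Y.card + (k+1)) K)) ∧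
    (∀ k : ℕ, 1 ≤ k → k ≤ L - ℓ →
      distToFam (Y ∪ Finset.Icc ((ℓ:ℤ)+1) ((ℓ:ℤ)+1)) (VleK L (Y.card + 1) K) ≤
        distToFam (Y ∪ Finset.Icc ((ℓ:ℤ)+1) ((ℓ:ℤ)+(k:ℤ))) (VleK L (Y.card + k) K)) := by
  have hstep : ∀ k : ℕ, 1 ≤ k → k + 1 ≤ L - ℓ →
      distToFam (Y ∪ Finset.Icc ((ℓ:ℤ)+1) ((ℓ:ℤ)+(k:ℤ))) (VleK L (Y.card + k) K) ≤
        distToFam (Y ∪ Finset.Icc ((ℓ:ℤ)+1) ((ℓ:ℤ)+(k:ℤ)+1)) (VleK L (Y.card + (k+1)) K) := by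
    intro k hk hkL
    exact main_step ℓ L Y hY k (by omega) K hK
  refine ⟨hstep, ?_⟩
  intro k hk hkL
  induction k with
  | zero => omega
  | succ k ih =>
    rcases Nat.eq_or_lt_of_le hk with he | hl
    · have : (k : ℤ) = 0 := by omega
      simp only [← he]
      norm_num
    · have hk1 : 1 ≤ k := by omega
      have h' := hstep k hk1 (by omega)
      have hcast : ((k+1 : ℕ) : ℤ) = (k:ℤ) + 1 := by push_cast; ring
      calc distToFam (Y ∪ Finset.Icc ((ℓ:ℤ)+1) ((ℓ:ℤ)+1)) (VleK L (Y.card + 1) K)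
          ≤ distToFam (Y ∪ Finset.Icc ((ℓ:ℤ)+1) ((ℓ:ℤ)+(k:ℤ))) (VleK L (Y.card + k) K) :=
            ih hk1 (by omega)
        _ ≤ distToFam (Y ∪ Finset.Icc ((ℓ:ℤ)+1) ((ℓ:ℤ)+(k:ℤ)+1)) (VleK L (Y.card + (k+1)) K) := h'
        _ = distToFam (Y ∪ Finset.Icc ((ℓ:ℤ)+1) ((ℓ:ℤ)+((k+1:ℕ):ℤ))) (VleK L (Y.card + (k+1)) K) := by
            rw [hcast, add_assoc]
end
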